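/- arXiv:2603.23312 — 5 statements merged into one kernel-verified Lean document; each statement's English description precedes it below -/
import Mathlib

section
/- Let t0 ≥ 0, T > t0, φᵏ ⇀ φ⁰ weak-* in L^∞([−θ,0], ℝⁿ), and x : [t0,T] → ℝⁿ measurable and essentially bounded. Define 𝗑ᵏ = φᵏ ⋄_{t0} x (concatenation). Then for every ε > 0 there exists w ∈ ℕ such that ‖𝗑ᵏ_{t0+q} − 𝗑⁰_{t0+q}‖_* < ε for all q ∈ [0, T−t0] and all k ≥ w; i.e., the shifted segments converge weak-* uniformly over the shift parameter q. -/
open MeasureTheory Set Filter Topology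
open scoped ENNReal

/-!
After the substitution `t = q + s`, the `i`-th term of the series is `D k (H i q)`, where
`D k = ⟨·, φ k - φ0⟩` on `L¹([-θ,0])` and `H i q` is the translate `g i (· - q)` restricted to
`[-θ,0]`. Translation is continuous in `L¹`, so `{H i q | q ∈ [0, T - t0]}` is compact; by
Banach–Steinhaus the `D k` are uniformly bounded, hence equicontinuous, so their pointwise
convergence to `0` is uniform on that compact set. Since `|D k (H i q)| ≤ C`, dominated
convergence for the series with weights `2^{-(i+1)}` makes the whole sum converge uniformly.
-/

/-- Segment at time `t0 + q` (as a function of `s ∈ [−θ,0]`) of the concatenation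
`ψ ⋄_{t0} x`: it equals `ψ (q+s)` when `t0+q+s < t0` and `x (t0+q+s)` otherwise. -/
noncomputable def seg7 (n : ℕ) (t0 : ℝ) (x ψ : ℝ → (Fin n → ℝ)) (q s : ℝ) : Fin n → ℝ :=
  if q + s < 0 then ψ (q + s) else x (t0 + q + s)

theorem tendstoUniformlyOn_zero_iff_tendsto_prod {ι α G : Type*} [NormedAddCommGroup G]
    {l : Filter ι} {s : Set α} {F : ι → α → G} :
    TendstoUniformlyOn F 0 l s ↔ Tendsto (fun p : ι × α => F p.1 p.2) (l ×ˢ 𝓟 s) (𝓝 0) := by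
  simp_rw [Metric.tendstoUniformlyOn_iff, Metric.tendsto_nhds, eventually_prod_principal_iff,
    Pi.zero_apply, dist_comm]

theorem tendstoUniformlyOn_tsum_of_dominated {ι α G : Type*} [NormedAddCommGroup G]
    [CompleteSpace G] {l : Filter ι} {s : Set α} {f : ι → ℕ → α → G}
    {bound : ℕ → ℝ} (hsum : Summable bound) (hbound : ∀ k n, ∀ x ∈ s, ‖f k n x‖ ≤ bound n)
    (hf : ∀ n, TendstoUniformlyOn (fun k => f k n) 0 l s) :
    TendstoUniformlyOn (fun k x => ∑' n, f k n x) 0 l s := by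
  simp_rw [tendstoUniformlyOn_zero_iff_tendsto_prod] at hf ⊢
  simpa using tendsto_tsum_of_dominated_convergence hsum hf
    (eventually_prod_principal_iff.mpr (.of_forall fun k x hx n => hbound k n x hx))

theorem ContinuousLinearMap.tendstoUniformlyOn_of_tendsto_of_isCompact
    {𝕜 E F ι : Type*} [NontriviallyNormedField 𝕜] [NormedAddCommGroup E] [NormedSpace 𝕜 E]
    [NormedAddCommGroup F] [NormedSpace 𝕜 F] {l : Filter ι} {Λ : ι → E →L[𝕜] F} {Λ₀ : E → F}
    {C : ℝ} (hC : ∀ i, ‖Λ i‖ ≤ C) (hΛ : ∀ v, Tendsto (fun i => Λ i v) l (𝓝 (Λ₀ v)))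
    {S : Set E} (hS : IsCompact S) :
    TendstoUniformlyOn (fun i => ⇑(Λ i)) Λ₀ l S := by
  have : CompactSpace S := isCompact_iff_compactSpace.mp hS
  have hequi : Equicontinuous ((↑) ∘ Λ) :=
    ((NormedSpace.equicontinuous_TFAE Λ).out 5 1).mp (by exact ⟨C, hC⟩)
  have hequiS : Equicontinuous fun i (v : S) => Λ i v :=
    (equicontinuous_restrict_iff _).mpr (hequi.equicontinuousOn S)
  rw [tendstoUniformlyOn_iff_tendstoUniformly_comp_coe]
  exact UniformFun.tendsto_iff_tendstoUniformly.mp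
    ((hequiS.tendsto_uniformFun_iff_pi l _).mpr (tendsto_pi_nhds.mpr fun v => hΛ v))

theorem MeasureTheory.Integrable.exists_continuous_translate_restrict {E : Type*}
    [NormedAddCommGroup E] [NormedSpace ℝ E] {G : ℝ → E} (hG : Integrable G) (s : Set ℝ) :
    ∃ H : ℝ → Lp E 1 (volume.restrict s), Continuous H ∧ (∀ q, ‖H q‖ ≤ ∫ t, ‖G t‖) ∧
      ∀ q, H q =ᵐ[volume.restrict s] fun t => G (t - q) := by
  have : Fact ((1 : ℝ≥0∞) ≠ ∞) := ⟨ENNReal.one_ne_top⟩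
  set R := LpToLpRestrictCLM ℝ E ℝ volume 1 s
  refine ⟨fun q => R (DomAddAct.mk (-q) +ᵥ hG.toL1 G), ?_, fun q => ?_, fun q => ?_⟩
  · exact R.continuous.comp ((DomAddAct.continuous_mk.comp continuous_neg).vadd continuous_const)
  · calc ‖R (DomAddAct.mk (-q) +ᵥ hG.toL1 G)‖ ≤ ‖DomAddAct.mk (-q) +ᵥ hG.toL1 G‖ :=
          norm_Lp_toLp_restrict_le s _
      _ = ∫ t, ‖G t‖ := by rw [DomAddAct.norm_vadd_Lp, L1.norm_of_fun_eq_integral_norm]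
  · refine (LpToLpRestrictCLM_coeFn ℝ s _).trans (ae_restrict_of_ae ?_)
    refine (DomAddAct.vadd_Lp_ae_eq _ _).trans ?_
    have := (measurePreserving_add_left volume (-q)).quasiMeasurePreserving.ae_eq_comp
      hG.coeFn_toL1
    simpa [Function.comp_def, neg_add_eq_sub] using this

noncomputable def dotProductL (ι : Type*) [Fintype ι] : (ι → ℝ) →L[ℝ] (ι → ℝ) →L[ℝ] ℝ :=
  ∑ j, (ContinuousLinearMap.mul ℝ ℝ).bilinearComp (.proj j) (.proj j)

@[simp] lemma dotProductL_apply {ι : Type*} [Fintype ι] (u v : ι → ℝ) :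
    dotProductL ι u v = ∑ j, u j * v j := by
  simp [dotProductL]

lemma dotProductL_lpPairing_eq {α ι : Type*} [MeasurableSpace α] [Fintype ι] {μ : Measure α}
    {v : Lp (ι → ℝ) 1 μ} {w : Lp (ι → ℝ) ∞ μ} {h f : α → ι → ℝ}
    (hv : v =ᵐ[μ] h) (hw : w =ᵐ[μ] f) :
    (dotProductL ι).lpPairing μ 1 ∞ v w = ∫ x, ∑ j, h x j * f x j ∂μ := by
  rw [ContinuousLinearMap.lpPairing_eq_integral]
  refine integral_congr_ae ?_
  filter_upwards [hv, hw] with x hvx hwx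
  simp [hvx, hwx]

theorem exists_bounded_pairing_sub_tendsto_zero {α ι : Type*} [MeasurableSpace α] [Fintype ι]
    {μ : Measure α} {φ : ℕ → α → ι → ℝ} {φ0 : α → ι → ℝ}
    (hm : ∀ k, MemLp (φ k) ⊤ μ) (hm0 : MemLp φ0 ⊤ μ)
    (hconv : ∀ h : α → ι → ℝ, Integrable h μ →
      Tendsto (fun k => ∫ s, ∑ j, h s j * φ k s j ∂μ) atTop
        (𝓝 (∫ s, ∑ j, h s j * φ0 s j ∂μ))) :
    ∃ D : ℕ → Lp (ι → ℝ) 1 μ →L[ℝ] ℝ, (∃ C, ∀ k, ‖D k‖ ≤ C) ∧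
      (∀ v, Tendsto (fun k => D k v) atTop (𝓝 0)) ∧
      ∀ k (v : Lp (ι → ℝ) 1 μ) (h : α → ι → ℝ), v =ᵐ[μ] h →
        D k v = ∫ s, ∑ j, h s j * (φ k s j - φ0 s j) ∂μ := by
  set L := (dotProductL ι).lpPairing μ 1 ∞
  set D := fun k => L.flip ((hm k).toLp - hm0.toLp)
  have hD_eq : ∀ k (v : Lp (ι → ℝ) 1 μ) (h : α → ι → ℝ), v =ᵐ[μ] h →
      D k v = ∫ s, ∑ j, h s j * (φ k s j - φ0 s j) ∂μ := fun k v h hv =>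
    dotProductL_lpPairing_eq hv <| (Lp.coeFn_sub _ _).trans <|
      (hm k).coeFn_toLp.sub hm0.coeFn_toLp
  have hD_tendsto : ∀ v, Tendsto (fun k => D k v) atTop (𝓝 0) := by
    intro v
    have hsplit : ∀ k, D k v = (∫ s, ∑ j, v s j * φ k s j ∂μ) - ∫ s, ∑ j, v s j * φ0 s j ∂μ :=
      fun k => (map_sub (L v) _ _).trans <| by
        rw [dotProductL_lpPairing_eq .rfl (hm k).coeFn_toLp,
          dotProductL_lpPairing_eq .rfl hm0.coeFn_toLp]
    simpa only [hsplit] using tendsto_sub_nhds_zero_iff.mpr (hconv _ (L1.integrable_coeFn v))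
  refine ⟨D, banach_steinhaus fun v => ?_, hD_tendsto, hD_eq⟩
  obtain ⟨C, hC⟩ := isBounded_iff_forall_norm_le.mp
    (Metric.isBounded_range_of_tendsto _ (hD_tendsto v))
  exact ⟨C, fun k => hC _ ⟨k, rfl⟩⟩

theorem ContinuousLinearMap.tendstoUniformlyOn_tsum_half_pow_abs {E X : Type*}
    [NormedAddCommGroup E] [NormedSpace ℝ E] [TopologicalSpace X] {D : ℕ → E →L[ℝ] ℝ} {C : ℝ}
    (hC : ∀ k, ‖D k‖ ≤ C) (hD : ∀ v, Tendsto (fun k => D k v) atTop (𝓝 0)) {H : ℕ → X → E}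
    (hH : ∀ i, Continuous (H i)) (hH_le : ∀ i q, ‖H i q‖ ≤ 1) {K : Set X} (hK : IsCompact K) :
    TendstoUniformlyOn (fun k q => ∑' i : ℕ, (1 / 2 : ℝ) ^ (i + 1) * |D k (H i q)|) 0 atTop K := by
  refine tendstoUniformlyOn_tsum_of_dominated (bound := fun i => (1 / 2 : ℝ) ^ (i + 1) * C)
    (((summable_nat_add_iff 1).mpr summable_geometric_two).mul_right C)
    (fun k i q _ => ?_) (fun i => ?_)
  · rw [norm_mul, norm_abs_eq_norm, Real.norm_of_nonneg (by positivity)]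
    gcongr
    exact (D k).le_of_opNorm_le_of_le (hC k) (hH_le i q) |>.trans_eq (mul_one C)
  · have hDH : TendstoUniformlyOn (fun k q => D k (H i q)) 0 atTop K :=
      ((tendstoUniformlyOn_of_tendsto_of_isCompact hC hD (hK.image (hH i))).comp (H i)).mono
        (subset_preimage_image _ _)
    rw [tendstoUniformlyOn_zero_iff_tendsto_prod] at hDH ⊢
    simpa only [abs_zero, mul_zero] using hDH.abs.const_mul ((1 / 2 : ℝ) ^ (i + 1))

theorem integral_seg7_sub_eq {n : ℕ} {θ q : ℝ} (hq : 0 ≤ q) (t0 : ℝ) (x ψ ψ₀ g : ℝ → Fin n → ℝ) :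
    ∫ s in Icc (-θ) 0, ∑ j, g s j * (seg7 n t0 x ψ q s j - seg7 n t0 x ψ₀ q s j)
      = ∫ t in Icc (-θ) 0, ∑ j, (Icc (-θ) 0).indicator g (t - q) j * (ψ t j - ψ₀ t j) := by
  set G := (Icc (-θ) 0).indicator g
  set F : ℝ → ℝ := fun t => ∑ j, G (t - q) j * (Iio 0).indicator (ψ - ψ₀) t j
  have hshift : ∀ s, (Icc (-θ) 0).indicator
      (fun s => ∑ j, g s j * (seg7 n t0 x ψ q s j - seg7 n t0 x ψ₀ q s j)) s = F (s + q) := by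
    intro s
    by_cases hs : s ∈ Icc (-θ) 0
    · by_cases hqs : q + s < 0 <;> simp [F, G, seg7, hs, hqs, add_comm s q]
    · simp [F, G, hs]
  have hsupp : ∀ t ∉ Ico (-θ) 0, F t = 0 := by
    intro t ht
    by_cases ht0 : t < 0
    · have : t - q ∉ Icc (-θ) 0 := fun h => ht ⟨by linarith [h.1], ht0⟩
      simp [F, G, this]
    · simp [F, ht0]
  calc ∫ s in Icc (-θ) 0, ∑ j, g s j * (seg7 n t0 x ψ q s j - seg7 n t0 x ψ₀ q s j)
      = ∫ s, F (s + q) := by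
        rw [← integral_indicator measurableSet_Icc]; exact congrArg _ (funext hshift)
    _ = ∫ t, F t := integral_add_right_eq_self F q
    _ = ∫ t in Ico (-θ) 0, F t := (setIntegral_eq_integral_of_forall_compl_eq_zero hsupp).symm
    _ = ∫ t in Ico (-θ) 0, ∑ j, G (t - q) j * (ψ t j - ψ₀ t j) :=
        setIntegral_congr_fun measurableSet_Ico fun t ht => by simp [F, ht.2]
    _ = _ := integral_Icc_eq_integral_Ico.symm

theorem stmt_7_general (n : ℕ) (θ : ℝ) (t0 T : ℝ)
    (g : ℕ → ℝ → (Fin n → ℝ))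
    (hgi : ∀ i, Integrable (g i) (volume.restrict (Set.Icc (-θ) 0)))
    (hgb : ∀ i, (∫ s in Set.Icc (-θ) 0, ‖g i s‖) ≤ 1)
    (φ : ℕ → ℝ → (Fin n → ℝ)) (φ0 : ℝ → (Fin n → ℝ))
    (hm : ∀ k, MemLp (φ k) ⊤ (volume.restrict (Set.Icc (-θ) 0)))
    (hm0 : MemLp φ0 ⊤ (volume.restrict (Set.Icc (-θ) 0)))
    (hconv : ∀ h : ℝ → (Fin n → ℝ), Integrable h (volume.restrict (Set.Icc (-θ) 0)) →
      Tendsto (fun k => ∫ s in Set.Icc (-θ) 0, ∑ j, h s j * φ k s j) atTop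
        (nhds (∫ s in Set.Icc (-θ) 0, ∑ j, h s j * φ0 s j)))
    (x : ℝ → (Fin n → ℝ)) :
    ∀ ε > 0, ∃ w : ℕ, ∀ q ∈ Set.Icc (0 : ℝ) (T - t0), ∀ k ≥ w,
      (∑' i : ℕ, (1 / 2 : ℝ) ^ (i + 1) *
        |∫ s in Set.Icc (-θ) 0, ∑ j, g i s j *
          (seg7 n t0 x (φ k) q s j - seg7 n t0 x φ0 q s j)|) < ε := by
  obtain ⟨D, ⟨C, hC⟩, hD_tendsto, hD_eq⟩ := exists_bounded_pairing_sub_tendsto_zero hm hm0 hconv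
  choose H hH_cont hH_norm hH_ae using fun i =>
    (IntegrableOn.integrable_indicator (hgi i) measurableSet_Icc)
      |>.exists_continuous_translate_restrict (Icc (-θ) 0)
  have hterm : ∀ i, ∀ q ∈ Icc (0 : ℝ) (T - t0), ∀ k, (∫ s in Icc (-θ) 0, ∑ j, g i s j *
      (seg7 n t0 x (φ k) q s j - seg7 n t0 x φ0 q s j)) = D k (H i q) := fun i q hq k => by
    rw [integral_seg7_sub_eq hq.1, hD_eq k _ _ (hH_ae i q)]
  have hH_le : ∀ i q, ‖H i q‖ ≤ 1 := fun i q => by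
    refine (hH_norm i q).trans (le_of_eq_of_le ?_ (hgb i))
    simp_rw [norm_indicator_eq_indicator_norm]
    exact integral_indicator measurableSet_Icc
  intro ε hε
  obtain ⟨w, hw⟩ := eventually_atTop.mp <| Metric.tendstoUniformlyOn_iff.mp
    (ContinuousLinearMap.tendstoUniformlyOn_tsum_half_pow_abs hC hD_tendsto hH_cont hH_le
      (isCompact_Icc (a := 0) (b := T - t0))) ε hε
  refine ⟨w, fun q hq k hk => ?_⟩
  have := hw k hk q hq
  rw [Pi.zero_apply, dist_zero_left, Real.norm_eq_abs] at this
  simpa only [hterm _ q hq k] using (le_abs_self _).trans_lt this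

/-- If `φᵏ ⇀ φ⁰` weak-* in `L^∞([−θ,0],ℝⁿ)` and `x` is measurable and essentially
bounded on `[t0,T]`, then the segments of the concatenations `φᵏ ⋄_{t0} x` converge
weak-* (in the metrizing norm `‖·‖_*`) to those of `φ⁰ ⋄_{t0} x`, uniformly over the
shift `q ∈ [0, T−t0]`. -/
theorem stmt_7 (n : ℕ) (θ : ℝ) (hθ : 0 < θ) (t0 T : ℝ) (ht0 : 0 ≤ t0) (hT : t0 < T)
    (g : ℕ → ℝ → (Fin n → ℝ))
    (hgi : ∀ i, Integrable (g i) (volume.restrict (Set.Icc (-θ) 0)))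
    (hgb : ∀ i, (∫ s in Set.Icc (-θ) 0, ‖g i s‖) ≤ 1)
    (hdense : ∀ h : ℝ → (Fin n → ℝ), Integrable h (volume.restrict (Set.Icc (-θ) 0)) →
      (∫ s in Set.Icc (-θ) 0, ‖h s‖) ≤ 1 → ∀ ε > 0, ∃ i,
        (∫ s in Set.Icc (-θ) 0, ‖h s - g i s‖) < ε)
    (φ : ℕ → ℝ → (Fin n → ℝ)) (φ0 : ℝ → (Fin n → ℝ))
    (hm : ∀ k, MemLp (φ k) ⊤ (volume.restrict (Set.Icc (-θ) 0)))
    (hm0 : MemLp φ0 ⊤ (volume.restrict (Set.Icc (-θ) 0)))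
    (hconv : ∀ h : ℝ → (Fin n → ℝ), Integrable h (volume.restrict (Set.Icc (-θ) 0)) →
      Tendsto (fun k => ∫ s in Set.Icc (-θ) 0, ∑ j, h s j * φ k s j) atTop
        (nhds (∫ s in Set.Icc (-θ) 0, ∑ j, h s j * φ0 s j)))
    (x : ℝ → (Fin n → ℝ))
    (hxm : AEStronglyMeasurable x (volume.restrict (Set.Icc t0 T)))
    (hxb : eLpNorm x ⊤ (volume.restrict (Set.Icc t0 T)) < ⊤) :
    ∀ ε > 0, ∃ w : ℕ, ∀ q ∈ Set.Icc (0 : ℝ) (T - t0), ∀ k ≥ w,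
      (∑' i : ℕ, (1 / 2 : ℝ) ^ (i + 1) *
        |∫ s in Set.Icc (-θ) 0, ∑ j, g i s j *
          (seg7 n t0 x (φ k) q s j - seg7 n t0 x φ0 q s j)|) < ε :=
  stmt_7_general n θ t0 T g hgi hgb φ φ0 hm hm0 hconv x
end

section
/- Let h ∈ L¹([t0, t0+θ], ℝ^{1×n}) (row vector valued) and R > 0. For t ∈ [t0, t0+θ] and φ ∈ B_R^{L^∞([−θ,0],ℝⁿ)}, define 𝓛*(t,φ) = ∫_{−θ}^0 h*(r) χ(t,r) φ(r) dr, where h*(r) = h(r + t0 + θ) and χ(t,r) = 1 if −θ ≤ r ≤ t − t0 − θ and 0 otherwise. Then 𝓛* is continuous on [t0, t0+θ] × B_R^{L^∞} with the weak-* topology on the ball, and hence uniformly continuous there. -/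
/-!
`‖1_{(-∞,a]} h* - 1_{(-∞,b]} h*‖₁` is the integral of `‖h*‖` over an interval of length `|a - b|`,
so by absolute continuity of the integral the truncated kernel `a ↦ 1_{(-∞,a]} h*` is uniformly
continuous into `L¹`. Pairing an `L¹`-convergent kernel with a bounded weak-* convergent sequence
in `L^∞` gives sequential continuity. For uniform continuity, finitely many truncations are
`L¹`-close to every truncation with threshold in a compact interval, and each of them is
`L¹`-close to a multiple `c • gᵢ`, whose pairing with `φ - ψ` is at most `2^(i+1) ‖φ - ψ‖_*`.
-/

open MeasureTheory Set Filter Topology Uniformity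

theorem abs_dotProduct_le {ι : Type*} [Fintype ι] (u v : ι → ℝ) :
    |u ⬝ᵥ v| ≤ Fintype.card ι * (‖u‖ * ‖v‖) := by
  calc |u ⬝ᵥ v| ≤ ∑ j, |u j * v j| := Finset.abs_sum_le_sum_abs _ _
    _ ≤ ∑ _j : ι, ‖u‖ * ‖v‖ := by
      gcongr with j
      rw [abs_mul]
      exact mul_le_mul (norm_le_pi_norm u j) (norm_le_pi_norm v j) (abs_nonneg _) (norm_nonneg _)
    _ = Fintype.card ι * (‖u‖ * ‖v‖) := by simp

section Pairing

variable {α ι : Type*} [MeasurableSpace α] [Fintype ι] {μ : Measure α}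

theorem ae_norm_le_of_eLpNorm_top_le {E : Type*} [NormedAddCommGroup E] {v : α → E} {C : ℝ}
    (hC : 0 ≤ C) (hv : eLpNorm v ⊤ μ ≤ ENNReal.ofReal C) : ∀ᵐ s ∂μ, ‖v s‖ ≤ C := by
  filter_upwards [enorm_ae_le_eLpNormEssSup v μ] with s hs
  rw [eLpNorm_exponent_top] at hv
  rw [← ENNReal.ofReal_le_ofReal_iff hC, ofReal_norm]
  exact hs.trans hv

variable {u u' v w : α → ι → ℝ} {C : ℝ}

theorem MeasureTheory.Integrable.dotProduct_bdd (hu : Integrable u μ)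
    (hv : AEStronglyMeasurable v μ) (hvb : ∀ᵐ s ∂μ, ‖v s‖ ≤ C) :
    Integrable (fun s => u s ⬝ᵥ v s) μ := by
  refine integrable_finsetSum _ fun j _ => ?_
  have hvj : ∀ᵐ s ∂μ, ‖v s j‖ ≤ C := hvb.mono fun s hs => (norm_le_pi_norm (v s) j).trans hs
  simpa only [mul_comm] using
    (hu.eval j).bdd_mul ((continuous_apply j).comp_aestronglyMeasurable hv) hvj

theorem abs_integral_dotProduct_le (hvb : ∀ᵐ s ∂μ, ‖v s‖ ≤ C) (hu : Integrable u μ) :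
    |∫ s, u s ⬝ᵥ v s ∂μ| ≤ Fintype.card ι * C * ∫ s, ‖u s‖ ∂μ := by
  rw [← Real.norm_eq_abs, ← integral_const_mul]
  refine norm_integral_le_of_norm_le (hu.norm.const_mul _) ?_
  filter_upwards [hvb] with s hs
  calc ‖u s ⬝ᵥ v s‖ ≤ Fintype.card ι * (‖u s‖ * ‖v s‖) := abs_dotProduct_le _ _
    _ ≤ Fintype.card ι * C * ‖u s‖ := by
      rw [mul_comm (‖u s‖), ← mul_assoc]; gcongr

theorem abs_integral_dotProduct_sub_le (hv : AEStronglyMeasurable v μ)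
    (hvb : ∀ᵐ s ∂μ, ‖v s‖ ≤ C) (hu : Integrable u μ) (hu' : Integrable u' μ) :
    |∫ s, u s ⬝ᵥ v s ∂μ - ∫ s, u' s ⬝ᵥ v s ∂μ| ≤ Fintype.card ι * C * ∫ s, ‖u s - u' s‖ ∂μ := by
  rw [← integral_sub (hu.dotProduct_bdd hv hvb) (hu'.dotProduct_bdd hv hvb)]
  simp_rw [← sub_dotProduct]
  exact abs_integral_dotProduct_le hvb (hu.sub hu')

theorem abs_integral_dotProduct_sub_le_add (hv : AEStronglyMeasurable v μ)
    (hvb : ∀ᵐ s ∂μ, ‖v s‖ ≤ C) (hw : AEStronglyMeasurable w μ) {C' : ℝ}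
    (hwb : ∀ᵐ s ∂μ, ‖w s‖ ≤ C') (hu : Integrable u μ) (hu' : Integrable u' μ) :
    |∫ s, u s ⬝ᵥ v s ∂μ - ∫ s, u' s ⬝ᵥ w s ∂μ| ≤
      Fintype.card ι * C * ∫ s, ‖u s - u' s‖ ∂μ + |∫ s, u' s ⬝ᵥ (v - w) s ∂μ| := by
  have hsplit : ∫ s, u' s ⬝ᵥ v s ∂μ - ∫ s, u' s ⬝ᵥ w s ∂μ = ∫ s, u' s ⬝ᵥ (v - w) s ∂μ := by
    rw [← integral_sub (hu'.dotProduct_bdd hv hvb) (hu'.dotProduct_bdd hw hwb)]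
    simp_rw [Pi.sub_apply, dotProduct_sub]
  calc _ = |(∫ s, u s ⬝ᵥ v s ∂μ - ∫ s, u' s ⬝ᵥ v s ∂μ) + ∫ s, u' s ⬝ᵥ (v - w) s ∂μ| := by
        rw [← hsplit]; ring_nf
    _ ≤ _ := (abs_add_le _ _).trans (by gcongr; exact abs_integral_dotProduct_sub_le hv hvb hu hu')

theorem tendsto_integral_dotProduct_of_tendsto {β : Type*} {l : Filter β}
    {u v : β → α → ι → ℝ} {u₀ v₀ : α → ι → ℝ} (hu : ∀ k, Integrable (u k) μ)
    (hu₀ : Integrable u₀ μ) (hv : ∀ k, AEStronglyMeasurable (v k) μ)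
    (hvb : ∀ k, ∀ᵐ s ∂μ, ‖v k s‖ ≤ C)
    (huu₀ : Tendsto (fun k => ∫ s, ‖u k s - u₀ s‖ ∂μ) l (𝓝 0))
    (hvv₀ : Tendsto (fun k => ∫ s, u₀ s ⬝ᵥ v k s ∂μ) l (𝓝 (∫ s, u₀ s ⬝ᵥ v₀ s ∂μ))) :
    Tendsto (fun k => ∫ s, u k s ⬝ᵥ v k s ∂μ) l (𝓝 (∫ s, u₀ s ⬝ᵥ v₀ s ∂μ)) := by
  have herr : Tendsto (fun k => ∫ s, u k s ⬝ᵥ v k s ∂μ - ∫ s, u₀ s ⬝ᵥ v k s ∂μ) l (𝓝 0) := by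
    refine squeeze_zero_norm (fun k => abs_integral_dotProduct_sub_le (hv k) (hvb k) (hu k) hu₀) ?_
    simpa using huu₀.const_mul (Fintype.card ι * C)
  simpa using hvv₀.add herr

end Pairing

section WeakStar

variable {α ι : Type*} [MeasurableSpace α] [Fintype ι] {μ : Measure α} {g : ℕ → α → ι → ℝ}

/-- The norm `‖v‖_*` metrizing the weak-* topology on bounded sets of `L^∞(μ)`. -/
noncomputable def weakStarNorm (μ : Measure α) (g : ℕ → α → ι → ℝ) (v : α → ι → ℝ) : ℝ :=
  ∑' i, (1 / 2 : ℝ) ^ (i + 1) * |∫ s, g i s ⬝ᵥ v s ∂μ|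

structure IsDenseSeqUnitBall (μ : Measure α) (g : ℕ → α → ι → ℝ) : Prop where
  integrable : ∀ i, Integrable (g i) μ
  integral_norm_le_one : ∀ i, ∫ s, ‖g i s‖ ∂μ ≤ 1
  exists_integral_norm_sub_lt : ∀ u, Integrable u μ → ∫ s, ‖u s‖ ∂μ ≤ 1 →
    ∀ ε > 0, ∃ i, ∫ s, ‖u s - g i s‖ ∂μ < ε

variable {u v : α → ι → ℝ} {C ε : ℝ}

theorem abs_integral_dotProduct_le_weakStarNorm (hgi : ∀ i, Integrable (g i) μ)
    (hgb : ∀ i, ∫ s, ‖g i s‖ ∂μ ≤ 1) (hC : 0 ≤ C) (hvb : ∀ᵐ s ∂μ, ‖v s‖ ≤ C) (i : ℕ) :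
    |∫ s, g i s ⬝ᵥ v s ∂μ| ≤ 2 ^ (i + 1) * weakStarNorm μ g v := by
  have hbound : ∀ j, (1 / 2 : ℝ) ^ (j + 1) * |∫ s, g j s ⬝ᵥ v s ∂μ| ≤
      (1 / 2 : ℝ) ^ j * (Fintype.card ι * C) := fun j => by
    have := (abs_integral_dotProduct_le hvb (hgi j)).trans
      (mul_le_of_le_one_right (by positivity) (hgb j))
    exact mul_le_mul (pow_le_pow_of_le_one (by norm_num) (by norm_num) j.le_succ) this
      (abs_nonneg _) (by positivity)
  have hsum := summable_geometric_two.mul_right (Fintype.card ι * C)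
  have hle := (hsum.of_nonneg_of_le (fun j => by positivity) hbound).le_tsum i
    fun j _ => by positivity
  rw [weakStarNorm, ← mul_le_mul_iff_of_pos_left (by positivity : (0 : ℝ) < (1 / 2) ^ (i + 1))]
  calc _ ≤ _ := hle
    _ = _ := by rw [← mul_assoc, ← mul_pow]; norm_num

theorem IsDenseSeqUnitBall.exists_integral_norm_sub_smul_lt (hg : IsDenseSeqUnitBall μ g)
    (hu : Integrable u μ) {η : ℝ} (hη : 0 < η) :
    ∃ (c : ℝ) (i : ℕ), ∫ s, ‖u s - c • g i s‖ ∂μ < η := by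
  set c := ∫ s, ‖u s‖ ∂μ + 1
  have hc : 0 < c := by positivity
  have hw : ∫ s, ‖c⁻¹ • u s‖ ∂μ ≤ 1 := by
    simp_rw [norm_smul, integral_const_mul, Real.norm_of_nonneg (inv_nonneg.2 hc.le)]
    rw [inv_mul_le_one₀ hc]
    linarith
  obtain ⟨i, hi⟩ := hg.exists_integral_norm_sub_lt _ (hu.smul c⁻¹) hw (η / c) (by positivity)
  refine ⟨c, i, ?_⟩
  have hrw : ∀ s, u s - c • g i s = c • (c⁻¹ • u s - g i s) := fun s => by
    rw [smul_sub, smul_inv_smul₀ hc.ne']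
  simp_rw [hrw, norm_smul, integral_const_mul, Real.norm_of_nonneg hc.le]
  rwa [lt_div_iff₀' hc] at hi

theorem IsDenseSeqUnitBall.eventually_abs_integral_dotProduct_lt (hg : IsDenseSeqUnitBall μ g)
    (hC : 0 ≤ C) (hu : Integrable u μ) (hε : 0 < ε) :
    ∀ᶠ δ in 𝓝[>] 0, ∀ v, AEStronglyMeasurable v μ → (∀ᵐ s ∂μ, ‖v s‖ ≤ C) →
      weakStarNorm μ g v < δ → |∫ s, u s ⬝ᵥ v s ∂μ| < ε := by
  obtain ⟨η, hη, hηε⟩ := exists_pos_mul_lt (half_pos hε) (Fintype.card ι * C)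
  obtain ⟨c, i, hci⟩ := hg.exists_integral_norm_sub_smul_lt hu hη
  obtain ⟨δ₀, hδ₀, hδ₀ε⟩ := exists_pos_mul_lt (half_pos hε) (|c| * 2 ^ (i + 1))
  filter_upwards [Ioo_mem_nhdsGT hδ₀] with δ hδ v hv hvb hvδ
  have happrox := abs_integral_dotProduct_sub_le hv hvb hu ((hg.integrable i).smul c)
  have hsmul : ∫ s, (c • g i) s ⬝ᵥ v s ∂μ = c * ∫ s, g i s ⬝ᵥ v s ∂μ := by
    simp_rw [Pi.smul_apply, smul_dotProduct, smul_eq_mul, integral_const_mul]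
  rw [hsmul] at happrox
  have hgv := abs_integral_dotProduct_le_weakStarNorm hg.integrable hg.integral_norm_le_one hC hvb i
  have hcgv : |c * ∫ s, g i s ⬝ᵥ v s ∂μ| < ε / 2 := by
    rw [abs_mul]
    calc |c| * |∫ s, g i s ⬝ᵥ v s ∂μ| ≤ |c| * (2 ^ (i + 1) * δ₀) := by
          gcongr; exact hgv.trans (by gcongr; exact hvδ.le.trans hδ.2.le)
      _ < ε / 2 := by rwa [← mul_assoc]
  calc |∫ s, u s ⬝ᵥ v s ∂μ|
      ≤ |∫ s, u s ⬝ᵥ v s ∂μ - c * ∫ s, g i s ⬝ᵥ v s ∂μ| + |c * ∫ s, g i s ⬝ᵥ v s ∂μ| :=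
        sub_le_iff_le_add.1 (abs_sub_abs_le_abs_sub _ _)
    _ < ε / 2 + ε / 2 := by
      gcongr
      exact happrox.trans_lt ((mul_le_mul_of_nonneg_left hci.le (by positivity)).trans_lt hηε)
    _ = ε := add_halves ε

theorem IsDenseSeqUnitBall.eventually_forall_abs_integral_dotProduct_lt {X : Type*}
    [UniformSpace X] {K : Set X} {u : X → α → ι → ℝ} (hg : IsDenseSeqUnitBall μ g) (hC : 0 ≤ C)
    (hK : IsCompact K) (hu : ∀ x, Integrable (u x) μ)
    (huc : Tendsto (fun p : X × X => ∫ s, ‖u p.1 s - u p.2 s‖ ∂μ) (𝓤 X) (𝓝 0)) (hε : 0 < ε) :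
    ∀ᶠ δ in 𝓝[>] 0, ∀ x ∈ K, ∀ v, AEStronglyMeasurable v μ → (∀ᵐ s ∂μ, ‖v s‖ ≤ C) →
      weakStarNorm μ g v < δ → |∫ s, u x s ⬝ᵥ v s ∂μ| < ε := by
  have hV : ∀ᶠ p : X × X in 𝓤 X, Fintype.card ι * C * ∫ s, ‖u p.1 s - u p.2 s‖ ∂μ < ε / 2 :=
    (huc.const_mul _).eventually_lt_const (by simpa using half_pos hε)
  obtain ⟨F, -, hKF⟩ := hK.elim_nhds_subcover _ fun x _ => UniformSpace.ball_mem_nhds x hV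
  have hF := (eventually_all_finset F).2 fun x _ =>
    hg.eventually_abs_integral_dotProduct_lt hC (hu x) (half_pos hε)
  filter_upwards [hF] with δ hδ y hy v hv hvb hvδ
  obtain ⟨x, hxF, hxy⟩ := mem_iUnion₂.1 (hKF hy)
  calc |∫ s, u y s ⬝ᵥ v s ∂μ|
      ≤ |∫ s, u x s ⬝ᵥ v s ∂μ - ∫ s, u y s ⬝ᵥ v s ∂μ| + |∫ s, u x s ⬝ᵥ v s ∂μ| := by
        rw [abs_sub_comm]; exact sub_le_iff_le_add.1 (abs_sub_abs_le_abs_sub _ _)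
    _ < ε / 2 + ε / 2 :=
        add_lt_add_of_le_of_lt ((abs_integral_dotProduct_sub_le hv hvb (hu x) (hu y)).trans hxy.le)
          (hδ x hxF v hv hvb hvδ)
    _ = ε := add_halves ε

theorem IsDenseSeqUnitBall.exists_abs_integral_dotProduct_sub_lt {X : Type*}
    [PseudoMetricSpace X] {K : Set X} {u : X → α → ι → ℝ} (hg : IsDenseSeqUnitBall μ g)
    (hC : 0 ≤ C) (hK : IsCompact K) (hu : ∀ x, Integrable (u x) μ)
    (huc : Tendsto (fun p : X × X => ∫ s, ‖u p.1 s - u p.2 s‖ ∂μ) (𝓤 X) (𝓝 0)) (hε : 0 < ε) :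
    ∃ δ > 0, ∀ x, ∀ y ∈ K, ∀ v w, AEStronglyMeasurable v μ → AEStronglyMeasurable w μ →
      (∀ᵐ s ∂μ, ‖v s‖ ≤ C) → (∀ᵐ s ∂μ, ‖w s‖ ≤ C) → dist x y < δ →
      weakStarNorm μ g (v - w) < δ → |∫ s, u x s ⬝ᵥ v s ∂μ - ∫ s, u y s ⬝ᵥ w s ∂μ| < ε := by
  have hnear : ∀ᶠ p : X × X in 𝓤 X, Fintype.card ι * C * ∫ s, ‖u p.1 s - u p.2 s‖ ∂μ < ε / 2 :=
    (huc.const_mul _).eventually_lt_const (by simpa using half_pos hε)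
  obtain ⟨δ₁, hδ₁, hδ₁u⟩ := Metric.mem_uniformity_dist.1 hnear
  have hweak := hg.eventually_forall_abs_integral_dotProduct_lt (by positivity : 0 ≤ 2 * C) hK hu
    huc (half_pos hε)
  obtain ⟨δ, hδweak, hδ⟩ := (hweak.and (Ioo_mem_nhdsGT hδ₁)).exists
  refine ⟨δ, hδ.1, fun x y hy v w hv hw hvb hwb hxy hvw => ?_⟩
  have hvwb : ∀ᵐ s ∂μ, ‖(v - w) s‖ ≤ 2 * C := by
    filter_upwards [hvb, hwb] with s h1 h2
    exact (norm_sub_le _ _).trans (by linarith)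
  calc _ ≤ _ := abs_integral_dotProduct_sub_le_add hv hvb hw hwb (hu x) (hu y)
    _ < ε / 2 + ε / 2 :=
        add_lt_add (hδ₁u (hxy.trans hδ.2)) (hδweak y hy _ (hv.sub hw) hvwb hvw)
    _ = ε := add_halves ε

end WeakStar

theorem norm_indicator_Iic_sub_indicator_Iic {E : Type*} [NormedAddCommGroup E] (H : ℝ → E)
    (a b r : ℝ) :
    ‖(Iic a).indicator H r - (Iic b).indicator H r‖ = (uIoc a b).indicator (fun r => ‖H r‖) r := by
  by_cases ha : r ≤ a <;> by_cases hb : r ≤ b <;> simp [indicator, mem_uIoc, ha, hb]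

theorem tendsto_integral_norm_indicator_Iic_sub {E : Type*} [NormedAddCommGroup E] {S : Set ℝ}
    {H : ℝ → E} (hH : IntegrableOn H S) :
    Tendsto (fun p : ℝ × ℝ => ∫ s in S, ‖(Iic p.1).indicator H s - (Iic p.2).indicator H s‖)
      (𝓤 ℝ) (𝓝 0) := by
  simp_rw [norm_indicator_Iic_sub_indicator_Iic, integral_indicator measurableSet_uIoc]
  refine hH.norm.tendsto_setIntegral_nhds_zero ?_
  have hdist : Tendsto (fun p : ℝ × ℝ => ENNReal.ofReal (dist p.1 p.2)) (𝓤 ℝ) (𝓝 0) := by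
    rw [← ENNReal.ofReal_zero, Metric.uniformity_eq_comap_nhds_zero]
    exact (ENNReal.continuous_ofReal.tendsto 0).comp tendsto_comap
  refine tendsto_of_tendsto_of_tendsto_of_le_of_le tendsto_const_nhds hdist (fun _ => zero_le)
    fun p => ?_
  calc volume.restrict S (uIoc p.1 p.2) ≤ volume (uIoc p.1 p.2) := Measure.restrict_apply_le _ _
    _ = ENNReal.ofReal (dist p.1 p.2) := by rw [Real.volume_uIoc, Real.dist_eq, abs_sub_comm]

theorem MeasureTheory.IntegrableOn.comp_add_right_Icc {E : Type*} [NormedAddCommGroup E] {f : ℝ → E}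
    {a b : ℝ} (hf : IntegrableOn f (Icc a b)) (c : ℝ) :
    IntegrableOn (fun x => f (x + c)) (Icc (a - c) (b - c)) := by
  rw [← preimage_add_const_Icc]
  exact ((measurePreserving_add_right volume c).integrableOn_comp_preimage
    (measurableEmbedding_addRight c)).2 hf

theorem stmt_14_general (n : ℕ) (θ t0 R : ℝ) (hR : 0 < R)
    (h : ℝ → (Fin n → ℝ))
    (hh : Integrable h (volume.restrict (Set.Icc t0 (t0 + θ))))
    (g : ℕ → ℝ → (Fin n → ℝ))
    (hgi : ∀ i, Integrable (g i) (volume.restrict (Set.Icc (-θ) 0)))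
    (hgb : ∀ i, (∫ s in Set.Icc (-θ) 0, ‖g i s‖) ≤ 1)
    (hdense : ∀ u : ℝ → (Fin n → ℝ), Integrable u (volume.restrict (Set.Icc (-θ) 0)) →
      (∫ s in Set.Icc (-θ) 0, ‖u s‖) ≤ 1 → ∀ ε > 0, ∃ i,
        (∫ s in Set.Icc (-θ) 0, ‖u s - g i s‖) < ε) :
    (∀ (t : ℕ → ℝ) (t' : ℝ), (∀ k, t k ∈ Set.Icc t0 (t0 + θ)) → t' ∈ Set.Icc t0 (t0 + θ) →
      Tendsto t atTop (nhds t') →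
      ∀ (φ : ℕ → ℝ → (Fin n → ℝ)) (φ0 : ℝ → (Fin n → ℝ)),
        (∀ k, AEStronglyMeasurable (φ k) (volume.restrict (Set.Icc (-θ) 0))) →
        AEStronglyMeasurable φ0 (volume.restrict (Set.Icc (-θ) 0)) →
        (∀ k, eLpNorm (φ k) ⊤ (volume.restrict (Set.Icc (-θ) 0)) ≤ ENNReal.ofReal R) →
        eLpNorm φ0 ⊤ (volume.restrict (Set.Icc (-θ) 0)) ≤ ENNReal.ofReal R →
        (∀ u : ℝ → (Fin n → ℝ), Integrable u (volume.restrict (Set.Icc (-θ) 0)) →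
          Tendsto (fun k => ∫ s in Set.Icc (-θ) 0, ∑ j, u s j * φ k s j) atTop
            (nhds (∫ s in Set.Icc (-θ) 0, ∑ j, u s j * φ0 s j))) →
        Tendsto (fun k => ∫ r in Set.Icc (-θ) 0,
            if r ≤ t k - t0 - θ then ∑ i, h (r + t0 + θ) i * φ k r i else 0) atTop
          (nhds (∫ r in Set.Icc (-θ) 0,
            if r ≤ t' - t0 - θ then ∑ i, h (r + t0 + θ) i * φ0 r i else 0))) ∧
    ∀ ε > 0, ∃ δ > 0, ∀ t ∈ Set.Icc t0 (t0 + θ), ∀ t' ∈ Set.Icc t0 (t0 + θ),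
      ∀ φ ψ : ℝ → (Fin n → ℝ),
        AEStronglyMeasurable φ (volume.restrict (Set.Icc (-θ) 0)) →
        AEStronglyMeasurable ψ (volume.restrict (Set.Icc (-θ) 0)) →
        eLpNorm φ ⊤ (volume.restrict (Set.Icc (-θ) 0)) ≤ ENNReal.ofReal R →
        eLpNorm ψ ⊤ (volume.restrict (Set.Icc (-θ) 0)) ≤ ENNReal.ofReal R →
        |t - t'| < δ →
        (∑' i : ℕ, (1 / 2 : ℝ) ^ (i + 1) *
          |∫ s in Set.Icc (-θ) 0, ∑ j, g i s j * (φ s j - ψ s j)|) < δ →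
        |(∫ r in Set.Icc (-θ) 0,
            if r ≤ t - t0 - θ then ∑ i, h (r + t0 + θ) i * φ r i else 0) -
          ∫ r in Set.Icc (-θ) 0,
            if r ≤ t' - t0 - θ then ∑ i, h (r + t0 + θ) i * ψ r i else 0| < ε := by
  set μ := volume.restrict (Icc (-θ) 0)
  set H : ℝ → Fin n → ℝ := fun r => h (r + t0 + θ)
  have hH : IntegrableOn H (Icc (-θ) 0) := by
    simpa [H, add_assoc] using IntegrableOn.comp_add_right_Icc hh (t0 + θ)
  set u : ℝ → ℝ → Fin n → ℝ := fun a => (Iic a).indicator H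
  have hu : ∀ a, Integrable (u a) μ := fun a => hH.indicator measurableSet_Iic
  have huc : Tendsto (fun p : ℝ × ℝ => ∫ s, ‖u p.1 s - u p.2 s‖ ∂μ) (𝓤 ℝ) (𝓝 0) :=
    tendsto_integral_norm_indicator_Iic_sub hH
  have hL : ∀ (t : ℝ) (φ : ℝ → Fin n → ℝ),
      (∫ r, (if r ≤ t - t0 - θ then ∑ i, h (r + t0 + θ) i * φ r i else 0) ∂μ) =
        ∫ r, u (t - t0 - θ) r ⬝ᵥ φ r ∂μ := fun t φ =>
    integral_congr_ae (Eventually.of_forall fun r => by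
      by_cases hr : r ≤ t - t0 - θ <;> simp [u, H, hr, dotProduct])
  have hg : IsDenseSeqUnitBall μ g := ⟨hgi, hgb, hdense⟩
  simp only [hL]
  refine ⟨fun t t' _ _ htt' φ φ₀ hφ _ hφb _ hweak => ?_, fun ε hε => ?_⟩
  · have hshift : Tendsto (fun k => (t k - t0 - θ, t' - t0 - θ)) atTop (𝓤 ℝ) :=
      (((htt'.sub_const t0).sub_const θ).prodMk_nhds tendsto_const_nhds).mono_right
        (nhds_le_uniformity _)
    have hut : Tendsto (fun k => ∫ s, ‖u (t k - t0 - θ) s - u (t' - t0 - θ) s‖ ∂μ) atTop (𝓝 0) := by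
      simpa only [Function.comp_def] using huc.comp hshift
    exact tendsto_integral_dotProduct_of_tendsto (fun k => hu _) (hu _) hφ
      (fun k => ae_norm_le_of_eLpNorm_top_le hR.le (hφb k)) hut (hweak _ (hu _))
  · obtain ⟨δ, hδ, hδu⟩ := hg.exists_abs_integral_dotProduct_sub_lt hR.le
      (isCompact_Icc (a := -θ) (b := 0)) hu huc hε
    refine ⟨δ, hδ, fun t _ t' ht' φ ψ hφ hψ hφb hψb htt' hφψ => hδu _ _ ?_ φ ψ hφ hψ
      (ae_norm_le_of_eLpNorm_top_le hR.le hφb) (ae_norm_le_of_eLpNorm_top_le hR.le hψb) ?_ hφψ⟩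
    · exact ⟨by linarith [ht'.1], by linarith [ht'.2]⟩
    · rwa [dist_sub_right, dist_sub_right, Real.dist_eq]

/-- The truncated functional `𝓛*(t,φ) = ∫_{−θ}^0 h*(r) χ(t,r) φ(r) dr`, with
`h*(r) = h(r+t0+θ)` and `χ(t,r) = 1` iff `r ≤ t−t0−θ`, is (sequentially) continuous on
`[t0,t0+θ] × B_R^{L^∞}` with the weak-* topology on the ball, and uniformly continuous
there with respect to the metrizing norm `‖·‖_*`. -/
theorem stmt_14 (n : ℕ) (θ t0 R : ℝ) (hθ : 0 < θ) (ht0 : 0 ≤ t0) (hR : 0 < R)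
    (h : ℝ → (Fin n → ℝ))
    (hh : Integrable h (volume.restrict (Set.Icc t0 (t0 + θ))))
    (g : ℕ → ℝ → (Fin n → ℝ))
    (hgi : ∀ i, Integrable (g i) (volume.restrict (Set.Icc (-θ) 0)))
    (hgb : ∀ i, (∫ s in Set.Icc (-θ) 0, ‖g i s‖) ≤ 1)
    (hdense : ∀ u : ℝ → (Fin n → ℝ), Integrable u (volume.restrict (Set.Icc (-θ) 0)) →
      (∫ s in Set.Icc (-θ) 0, ‖u s‖) ≤ 1 → ∀ ε > 0, ∃ i,
        (∫ s in Set.Icc (-θ) 0, ‖u s - g i s‖) < ε) :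
    (∀ (t : ℕ → ℝ) (t' : ℝ), (∀ k, t k ∈ Set.Icc t0 (t0 + θ)) → t' ∈ Set.Icc t0 (t0 + θ) →
      Tendsto t atTop (nhds t') →
      ∀ (φ : ℕ → ℝ → (Fin n → ℝ)) (φ0 : ℝ → (Fin n → ℝ)),
        (∀ k, AEStronglyMeasurable (φ k) (volume.restrict (Set.Icc (-θ) 0))) →
        AEStronglyMeasurable φ0 (volume.restrict (Set.Icc (-θ) 0)) →
        (∀ k, eLpNorm (φ k) ⊤ (volume.restrict (Set.Icc (-θ) 0)) ≤ ENNReal.ofReal R) →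
        eLpNorm φ0 ⊤ (volume.restrict (Set.Icc (-θ) 0)) ≤ ENNReal.ofReal R →
        (∀ u : ℝ → (Fin n → ℝ), Integrable u (volume.restrict (Set.Icc (-θ) 0)) →
          Tendsto (fun k => ∫ s in Set.Icc (-θ) 0, ∑ j, u s j * φ k s j) atTop
            (nhds (∫ s in Set.Icc (-θ) 0, ∑ j, u s j * φ0 s j))) →
        Tendsto (fun k => ∫ r in Set.Icc (-θ) 0,
            if r ≤ t k - t0 - θ then ∑ i, h (r + t0 + θ) i * φ k r i else 0) atTop
          (nhds (∫ r in Set.Icc (-θ) 0,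
            if r ≤ t' - t0 - θ then ∑ i, h (r + t0 + θ) i * φ0 r i else 0))) ∧
    ∀ ε > 0, ∃ δ > 0, ∀ t ∈ Set.Icc t0 (t0 + θ), ∀ t' ∈ Set.Icc t0 (t0 + θ),
      ∀ φ ψ : ℝ → (Fin n → ℝ),
        AEStronglyMeasurable φ (volume.restrict (Set.Icc (-θ) 0)) →
        AEStronglyMeasurable ψ (volume.restrict (Set.Icc (-θ) 0)) →
        eLpNorm φ ⊤ (volume.restrict (Set.Icc (-θ) 0)) ≤ ENNReal.ofReal R →
        eLpNorm ψ ⊤ (volume.restrict (Set.Icc (-θ) 0)) ≤ ENNReal.ofReal R →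
        |t - t'| < δ →
        (∑' i : ℕ, (1 / 2 : ℝ) ^ (i + 1) *
          |∫ s in Set.Icc (-θ) 0, ∑ j, g i s j * (φ s j - ψ s j)|) < δ →
        |(∫ r in Set.Icc (-θ) 0,
            if r ≤ t - t0 - θ then ∑ i, h (r + t0 + θ) i * φ r i else 0) -
          ∫ r in Set.Icc (-θ) 0,
            if r ≤ t' - t0 - θ then ∑ i, h (r + t0 + θ) i * ψ r i else 0| < ε :=
  stmt_14_general n θ t0 R hR h hh g hgi hgb hdense
end

section
/- Let f satisfy: for every R, T > 0 there exists L such that |f(t,φ¹) − f(t,φ²)| ≤ L‖φ¹−φ²‖_∞ for all φ¹,φ² in the sup-norm ball of radius R and almost every t ∈ [0,T]; f(·,0) locally essentially bounded; and t ↦ f(t,(φ⋄_{t0}x)_t) measurable for continuous x. Then for every t0 ≥ 0 and bounded measurable initial history φ there exists α > t0 such that the integral operator (Py)(t) = φ(0) + ∫_{t0}^t f(s, (φ⋄_{t0}y)_s) ds is a contraction on a suitable closed ball of C([t0,α],ℝⁿ), and hence the delay differential equation ẋ(t) = f(t,(φ⋄_{t0}x)_t), x(t0) = φ(0), has a unique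 local solution. -/
/-!
On `[t0, α]` the Picard operator `P` moves a function at most `(C + L R) (α - t0)` away from
`φ 0` and is `L (α - t0)`-Lipschitz for the sup norm on the ball of radius `R`, where `L` is the
Lipschitz constant of `f` on histories bounded by `R` and `C` bounds `f (·, 0)`. For `α` close to
`t0` it is therefore a contraction of the closed ball of radius `R > ‖φ‖_∞` in `C([t0, α], ℝⁿ)`,
and Banach's fixed point theorem gives a solution. Two continuous solutions are bounded by some
`ρ`; with the Lipschitz constant `L` for `ρ`, their distance `d` satisfies
`d t ≤ L ∫_{t0}^t sup_{[t0, s]} d`; iterating this from a bound `D` of `d` gives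
`d t ≤ D (L (t - t0))^k / k!` for every `k`, so `d = 0`.
-/

open MeasureTheory Set Filter

/-- The segment at time `t` (as a function of `u ∈ [−θ,0]`) of the concatenation
`φ ⋄_{t0} x`. -/
noncomputable def seg15 (n : ℕ) (t0 : ℝ) (φ x : ℝ → (Fin n → ℝ)) (t u : ℝ) : Fin n → ℝ :=
  if t + u < t0 then φ (t + u - t0) else x (t + u)

section HistoryLipschitz

variable {E : Type*} [NormedAddCommGroup E]

def HistoryLipschitz (θ R L : ℝ) (g : (ℝ → E) → E) : Prop :=
  ∀ ψ1 ψ2 : ℝ → E, (∀ u ∈ Icc (-θ) 0, ‖ψ1 u‖ ≤ R) → (∀ u ∈ Icc (-θ) 0, ‖ψ2 u‖ ≤ R) →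
    ‖g ψ1 - g ψ2‖ ≤ L * sSup ((fun u => ‖ψ1 u - ψ2 u‖) '' Icc (-θ) 0)

variable {θ R L D : ℝ} {g : (ℝ → E) → E} {ψ ψ1 ψ2 : ℝ → E}

theorem HistoryLipschitz.norm_sub_le (hg : HistoryLipschitz θ R L g) (hL : 0 ≤ L) (hD : 0 ≤ D)
    (hψ1 : ∀ u ∈ Icc (-θ) 0, ‖ψ1 u‖ ≤ R) (hψ2 : ∀ u ∈ Icc (-θ) 0, ‖ψ2 u‖ ≤ R)
    (hψ : ∀ u ∈ Icc (-θ) 0, ‖ψ1 u - ψ2 u‖ ≤ D) : ‖g ψ1 - g ψ2‖ ≤ L * D :=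
  (hg ψ1 ψ2 hψ1 hψ2).trans <| mul_le_mul_of_nonneg_left
    (Real.sSup_le (by rintro _ ⟨u, hu, rfl⟩; exact hψ u hu) hD) hL

theorem HistoryLipschitz.norm_le (hg : HistoryLipschitz θ R L g) (hL : 0 ≤ L) (hR : 0 ≤ R)
    (hψ : ∀ u ∈ Icc (-θ) 0, ‖ψ u‖ ≤ R) : ‖g ψ‖ ≤ ‖g 0‖ + L * R :=
  (norm_le_insert' _ _).trans <| add_le_add_right
    (hg.norm_sub_le hL hR hψ (fun _ _ => by simpa using hR) (by simpa using hψ)) _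

end HistoryLipschitz

section Segment

variable {n : ℕ} {θ ρ L D t0 s u : ℝ} {φ y z : ℝ → Fin n → ℝ} {g : (ℝ → Fin n → ℝ) → Fin n → ℝ}

theorem norm_seg15_le (hφ : ∀ v, ‖φ v‖ ≤ ρ) (hy : ∀ r ∈ Icc t0 s, ‖y r‖ ≤ ρ) (hu : u ≤ 0) :
    ‖seg15 n t0 φ y s u‖ ≤ ρ := by
  unfold seg15
  split_ifs with h
  · exact hφ _
  · exact hy _ ⟨not_lt.1 h, by linarith⟩

theorem norm_seg15_sub_seg15_le (hD : 0 ≤ D) (hyz : ∀ r ∈ Icc t0 s, ‖y r - z r‖ ≤ D)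
    (hu : u ≤ 0) : ‖seg15 n t0 φ y s u - seg15 n t0 φ z s u‖ ≤ D := by
  unfold seg15
  split_ifs with h
  · simpa using hD
  · exact hyz _ ⟨not_lt.1 h, by linarith⟩

theorem HistoryLipschitz.norm_apply_seg15_le (hg : HistoryLipschitz θ ρ L g) (hL : 0 ≤ L)
    (hφ : ∀ v, ‖φ v‖ ≤ ρ) (hy : ∀ r ∈ Icc t0 s, ‖y r‖ ≤ ρ) :
    ‖g (seg15 n t0 φ y s)‖ ≤ ‖g 0‖ + L * ρ :=
  hg.norm_le hL ((norm_nonneg _).trans (hφ 0)) fun _ hu => norm_seg15_le hφ hy hu.2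

theorem HistoryLipschitz.norm_apply_seg15_sub_le (hg : HistoryLipschitz θ ρ L g) (hL : 0 ≤ L)
    (hD : 0 ≤ D) (hφ : ∀ v, ‖φ v‖ ≤ ρ) (hy : ∀ r ∈ Icc t0 s, ‖y r‖ ≤ ρ)
    (hz : ∀ r ∈ Icc t0 s, ‖z r‖ ≤ ρ) (hyz : ∀ r ∈ Icc t0 s, ‖y r - z r‖ ≤ D) :
    ‖g (seg15 n t0 φ y s) - g (seg15 n t0 φ z s)‖ ≤ L * D :=
  hg.norm_sub_le hL hD (fun _ hu => norm_seg15_le hφ hy hu.2)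
    (fun _ hu => norm_seg15_le hφ hz hu.2) fun _ hu => norm_seg15_sub_seg15_le hD hyz hu.2

end Segment

theorem nonpos_of_le_mul_integral_of_monotoneOn {d : ℝ → ℝ} {a b L D : ℝ} (hL : 0 ≤ L)
    (hD0 : 0 ≤ D) (hD : ∀ t ∈ Icc a b, d t ≤ D)
    (hd : ∀ t ∈ Icc a b, ∀ B : ℝ → ℝ, MonotoneOn B (Icc a t) → (∀ r ∈ Icc a t, d r ≤ B r) →
      d t ≤ L * ∫ s in a..t, B s) :
    ∀ t ∈ Icc a b, d t ≤ 0 := by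
  have hiter : ∀ k : ℕ, ∀ t ∈ Icc a b, d t ≤ D * ((L * (t - a)) ^ k / k.factorial) := by
    intro k
    induction k with
    | zero => simpa using hD
    | succ k ih =>
      intro t ht
      refine (hd t ht _ ?_ fun r hr => ih r ⟨hr.1, hr.2.trans ht.2⟩).trans_eq ?_
      · intro r hr s _ hrs
        have : 0 ≤ L * (r - a) := mul_nonneg hL (sub_nonneg.2 hr.1)
        dsimp only
        gcongr
      · simp only [mul_pow, intervalIntegral.integral_const_mul, intervalIntegral.integral_div,
          intervalIntegral.integral_comp_sub_right (fun x => x ^ k), integral_pow,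
          Nat.factorial_succ]
        push_cast
        field_simp
        ring
  intro t ht
  have hlim := (FloorSemiring.tendsto_pow_div_factorial_atTop (L * (t - a))).const_mul D
  rw [mul_zero] at hlim
  exact ge_of_tendsto' hlim fun k => hiter k t ht

theorem exists_fixedPoint_of_contraction_on_Icc {E : Type*} [NormedAddCommGroup E]
    [CompleteSpace E] {a b R κ : ℝ} (hab : a ≤ b) (hR : 0 ≤ R) (hκ0 : 0 ≤ κ) (hκ : κ < 1)
    (P : (ℝ → E) → ℝ → E)
    (hcont : ∀ y, ContinuousOn y (Icc a b) → (∀ t ∈ Icc a b, ‖y t‖ ≤ R) →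
      ContinuousOn (P y) (Icc a b))
    (hmaps : ∀ y, ContinuousOn y (Icc a b) → (∀ t ∈ Icc a b, ‖y t‖ ≤ R) →
      ∀ t ∈ Icc a b, ‖P y t‖ ≤ R)
    (hcontr : ∀ y z, ContinuousOn y (Icc a b) → ContinuousOn z (Icc a b) →
      (∀ t ∈ Icc a b, ‖y t‖ ≤ R) → (∀ t ∈ Icc a b, ‖z t‖ ≤ R) →
      ∀ D, (∀ t ∈ Icc a b, ‖y t - z t‖ ≤ D) → ∀ t ∈ Icc a b, ‖P y t - P z t‖ ≤ κ * D) :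
    ∃ x, ContinuousOn x (Icc a b) ∧ ∀ t ∈ Icc a b, x t = P x t := by
  let ball := Metric.closedBall (0 : C(Icc a b, E)) R
  let ext : ball → ℝ → E := fun y => IccExtend hab y.1
  have ext_apply (y : ball) {t : ℝ} (ht : t ∈ Icc a b) : ext y t = y.1 ⟨t, ht⟩ :=
    IccExtend_of_mem hab _ ht
  have ext_cont (y : ball) : ContinuousOn (ext y) (Icc a b) :=
    (continuous_IccExtend_iff.2 y.1.continuous).continuousOn
  have ext_norm (y : ball) : ∀ t ∈ Icc a b, ‖ext y t‖ ≤ R := fun t ht => by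
    rw [ext_apply y ht]
    exact (y.1.norm_coe_le_norm _).trans (mem_closedBall_zero_iff.1 y.2)
  have : CompleteSpace ball := Metric.isClosed_closedBall.completeSpace_coe
  have : Nonempty ball := ⟨⟨0, Metric.mem_closedBall_self hR⟩⟩
  let F : ball → ball := fun y =>
    ⟨⟨(Icc a b).domRestrict (P (ext y)), (hcont _ (ext_cont y) (ext_norm y)).domRestrict⟩,
      mem_closedBall_zero_iff.2 <| (ContinuousMap.norm_le _ hR).2 fun t =>
        hmaps _ (ext_cont y) (ext_norm y) t t.2⟩
  have hF : ContractingWith ⟨κ, hκ0⟩ F := by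
    refine ⟨hκ, LipschitzWith.of_dist_le_mul fun y z =>
      (ContinuousMap.dist_le (by positivity)).2 fun t => ?_⟩
    rw [dist_eq_norm]
    refine hcontr _ _ (ext_cont y) (ext_cont z) (ext_norm y) (ext_norm z) _ (fun r hr => ?_) t t.2
    rw [ext_apply y hr, ext_apply z hr, ← dist_eq_norm]
    exact ContinuousMap.dist_apply_le_dist _
  obtain ⟨x, hx⟩ : ∃ x, F x = x := ⟨_, hF.fixedPoint_isFixedPt⟩
  refine ⟨ext x, ext_cont x, fun t ht => ?_⟩
  conv_lhs => rw [← hx]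
  exact ext_apply (F x) ht

theorem exists_pos_le_one_mul_lt_one {L M : ℝ} (hL : 0 ≤ L) (hM : 0 ≤ M) :
    ∃ ε > (0 : ℝ), ε ≤ 1 ∧ L * ε < 1 ∧ M * ε ≤ 1 := by
  refine ⟨1 / (L + M + 2), by positivity, ?_, ?_, ?_⟩ <;>
    simp only [mul_one_div, div_le_one, div_lt_one, show 0 < L + M + 2 by positivity] <;>
    linarith

section Picard

variable {n : ℕ} {θ ρ L C t0 α t T : ℝ} {f : ℝ → (ℝ → Fin n → ℝ) → Fin n → ℝ}
  {φ y z : ℝ → Fin n → ℝ}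

noncomputable def picard (n : ℕ) (f : ℝ → (ℝ → Fin n → ℝ) → Fin n → ℝ) (t0 : ℝ)
    (φ y : ℝ → Fin n → ℝ) (t : ℝ) : Fin n → ℝ :=
  φ 0 + ∫ s in t0..t, f s (seg15 n t0 φ y s)

theorem ae_norm_apply_seg15_le
    (hLip : ∀ᵐ s ∂volume.restrict (Icc t0 α), HistoryLipschitz θ ρ L (f s))
    (hC : ∀ᵐ s ∂volume.restrict (Icc t0 α), ‖f s 0‖ ≤ C) (hL : 0 ≤ L) (hφ : ∀ u, ‖φ u‖ ≤ ρ)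
    (hy : ∀ r ∈ Icc t0 α, ‖y r‖ ≤ ρ) :
    ∀ᵐ s ∂volume.restrict (Icc t0 α), ‖f s (seg15 n t0 φ y s)‖ ≤ C + L * ρ := by
  filter_upwards [hLip, hC, ae_restrict_mem measurableSet_Icc] with s hs hCs hsI
  have := hs.norm_apply_seg15_le hL hφ fun r hr => hy r ⟨hr.1, hr.2.trans hsI.2⟩
  linarith

theorem integrableOn_apply_seg15
    (hLip : ∀ᵐ s ∂volume.restrict (Icc t0 α), HistoryLipschitz θ ρ L (f s))
    (hC : ∀ᵐ s ∂volume.restrict (Icc t0 α), ‖f s 0‖ ≤ C) (hL : 0 ≤ L) (hφ : ∀ u, ‖φ u‖ ≤ ρ)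
    (hy : ∀ r ∈ Icc t0 α, ‖y r‖ ≤ ρ)
    (hmeas : AEMeasurable (fun s => f s (seg15 n t0 φ y s)) (volume.restrict (Icc t0 α))) :
    IntegrableOn (fun s => f s (seg15 n t0 φ y s)) (Icc t0 α) :=
  (integrableOn_const measure_Icc_lt_top.ne).mono' hmeas.aestronglyMeasurable
    (ae_norm_apply_seg15_le hLip hC hL hφ hy)

theorem continuousOn_picard (hα : t0 ≤ α)
    (hI : IntegrableOn (fun s => f s (seg15 n t0 φ y s)) (Icc t0 α)) :
    ContinuousOn (picard n f t0 φ y) (Icc t0 α) := by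
  rw [← uIcc_of_le hα] at hI ⊢
  exact continuousOn_const.add (intervalIntegral.continuousOn_primitive_interval hI)

theorem norm_picard_le
    (hLip : ∀ᵐ s ∂volume.restrict (Icc t0 α), HistoryLipschitz θ ρ L (f s))
    (hC : ∀ᵐ s ∂volume.restrict (Icc t0 α), ‖f s 0‖ ≤ C) (hL : 0 ≤ L) (hC0 : 0 ≤ C)
    (hφ : ∀ u, ‖φ u‖ ≤ ρ) (hφ0 : ‖φ 0‖ + (C + L * ρ) * (α - t0) ≤ ρ)
    (hy : ∀ r ∈ Icc t0 α, ‖y r‖ ≤ ρ) : ∀ t ∈ Icc t0 α, ‖picard n f t0 φ y t‖ ≤ ρ := by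
  intro t ht
  have hbound := (ae_restrict_iff' measurableSet_Icc).1 (ae_norm_apply_seg15_le hLip hC hL hφ hy)
  have hint : ‖∫ s in t0..t, f s (seg15 n t0 φ y s)‖ ≤ (C + L * ρ) * |t - t0| :=
    intervalIntegral.norm_integral_le_of_norm_le_const_ae <| hbound.mono fun s hs hsI => by
      rw [uIoc_of_le ht.1] at hsI
      exact hs ⟨hsI.1.le, hsI.2.trans ht.2⟩
  have hρ : 0 ≤ ρ := (norm_nonneg _).trans (hφ 0)
  have hlen : (C + L * ρ) * |t - t0| ≤ (C + L * ρ) * (α - t0) := by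
    rw [abs_of_nonneg (sub_nonneg.2 ht.1)]
    gcongr
    exact ht.2
  exact (norm_add_le _ _).trans (by linarith)

theorem norm_picard_sub_picard_le
    (hLip : ∀ᵐ s ∂volume.restrict (Icc t0 α), HistoryLipschitz θ ρ L (f s)) (hL : 0 ≤ L)
    (hφ : ∀ u, ‖φ u‖ ≤ ρ) (hy : ∀ r ∈ Icc t0 α, ‖y r‖ ≤ ρ) (hz : ∀ r ∈ Icc t0 α, ‖z r‖ ≤ ρ)
    (hIy : IntegrableOn (fun s => f s (seg15 n t0 φ y s)) (Icc t0 α))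
    (hIz : IntegrableOn (fun s => f s (seg15 n t0 φ z s)) (Icc t0 α)) (ht : t ∈ Icc t0 α)
    {B : ℝ → ℝ} (hB : MonotoneOn B (Icc t0 t)) (hyz : ∀ r ∈ Icc t0 t, ‖y r - z r‖ ≤ B r) :
    ‖picard n f t0 φ y t - picard n f t0 φ z t‖ ≤ L * ∫ s in t0..t, B s := by
  have hsub : uIcc t0 t ⊆ Icc t0 α := by rw [uIcc_of_le ht.1]; exact Icc_subset_Icc_right ht.2
  rw [picard, picard, add_sub_add_left_eq_sub, ← intervalIntegral.integral_sub
    (hIy.mono_set hsub).intervalIntegrable (hIz.mono_set hsub).intervalIntegrable,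
    ← intervalIntegral.integral_const_mul]
  refine intervalIntegral.norm_integral_le_of_norm_le ht.1 ?_ ?_
  · filter_upwards [(ae_restrict_iff' measurableSet_Icc).1 hLip] with s hs hsI
    have hs' : s ∈ Icc t0 t := Ioc_subset_Icc_self hsI
    have hsα : ∀ r ∈ Icc t0 s, r ∈ Icc t0 α := fun r hr => ⟨hr.1, hr.2.trans (hs'.2.trans ht.2)⟩
    have hst : ∀ r ∈ Icc t0 s, r ∈ Icc t0 t := fun r hr => ⟨hr.1, hr.2.trans hs'.2⟩
    have hBs : 0 ≤ B s := (norm_nonneg _).trans <|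
      (hyz t0 ⟨le_rfl, ht.1⟩).trans (hB ⟨le_rfl, ht.1⟩ hs' hs'.1)
    exact (hs (hsα s ⟨hs'.1, le_rfl⟩)).norm_apply_seg15_sub_le hL hBs hφ
      (fun r hr => hy r (hsα r hr)) (fun r hr => hz r (hsα r hr))
      fun r hr => (hyz r (hst r hr)).trans (hB (hst r hr) hs' hr.2)
  · rw [← uIcc_of_le ht.1] at hB
    exact hB.intervalIntegrable.const_mul L

theorem norm_picard_sub_picard_le_of_le
    (hLip : ∀ᵐ s ∂volume.restrict (Icc t0 α), HistoryLipschitz θ ρ L (f s)) (hL : 0 ≤ L)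
    (hφ : ∀ u, ‖φ u‖ ≤ ρ) (hy : ∀ r ∈ Icc t0 α, ‖y r‖ ≤ ρ) (hz : ∀ r ∈ Icc t0 α, ‖z r‖ ≤ ρ)
    (hIy : IntegrableOn (fun s => f s (seg15 n t0 φ y s)) (Icc t0 α))
    (hIz : IntegrableOn (fun s => f s (seg15 n t0 φ z s)) (Icc t0 α))
    {D : ℝ} (hyz : ∀ r ∈ Icc t0 α, ‖y r - z r‖ ≤ D) :
    ∀ t ∈ Icc t0 α, ‖picard n f t0 φ y t - picard n f t0 φ z t‖ ≤ L * (α - t0) * D := by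
  intro t ht
  have hD : 0 ≤ D := (norm_nonneg _).trans (hyz t0 ⟨le_rfl, ht.1.trans ht.2⟩)
  have hnorm := norm_picard_sub_picard_le hLip hL hφ hy hz hIy hIz ht monotoneOn_const
    fun r hr => hyz r ⟨hr.1, hr.2.trans ht.2⟩
  rw [intervalIntegral.integral_const, smul_eq_mul] at hnorm
  have hlen : L * ((t - t0) * D) ≤ L * ((α - t0) * D) := by
    gcongr
    exact ht.2
  linarith

theorem exists_ae_historyLipschitz_and_norm_le
    (hLip : ∀ R > (0 : ℝ), ∀ T > (0 : ℝ), ∃ L ≥ (0 : ℝ),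
      ∀ᵐ t ∂(volume.restrict (Icc 0 T)), HistoryLipschitz θ R L (f t))
    (hf0 : ∀ T > (0 : ℝ), ∃ C : ℝ, ∀ᵐ t ∂(volume.restrict (Icc 0 T)), ‖f t 0‖ ≤ C)
    (ht0 : 0 ≤ t0) (hρ : 0 < ρ) (hT : t0 < T) :
    ∃ L ≥ (0 : ℝ), ∃ C ≥ (0 : ℝ), ∀ α ≤ T,
      (∀ᵐ s ∂volume.restrict (Icc t0 α), HistoryLipschitz θ ρ L (f s)) ∧
      ∀ᵐ s ∂volume.restrict (Icc t0 α), ‖f s 0‖ ≤ C := by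
  obtain ⟨L, hL, hLipT⟩ := hLip ρ hρ T (by linarith)
  obtain ⟨C, hC⟩ := hf0 T (by linarith)
  refine ⟨L, hL, max C 0, le_max_right _ _, fun α hα => ?_⟩
  have hsub : Icc t0 α ⊆ Icc 0 T := Icc_subset_Icc ht0 hα
  exact ⟨ae_restrict_of_ae_restrict_of_subset hsub hLipT,
    ae_restrict_of_ae_restrict_of_subset hsub (hC.mono fun _ h => h.trans (le_max_left _ _))⟩

theorem picard_fixedPoint_unique
    (hLip : ∀ R > (0 : ℝ), ∀ T > (0 : ℝ), ∃ L ≥ (0 : ℝ),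
      ∀ᵐ t ∂(volume.restrict (Icc 0 T)), HistoryLipschitz θ R L (f t))
    (hf0 : ∀ T > (0 : ℝ), ∃ C : ℝ, ∀ᵐ t ∂(volume.restrict (Icc 0 T)), ‖f t 0‖ ≤ C)
    (ht0 : 0 ≤ t0) (hα : t0 < α)
    (hmeas : ∀ x, ContinuousOn x (Icc t0 α) →
      AEMeasurable (fun s => f s (seg15 n t0 φ x s)) (volume.restrict (Icc t0 α)))
    (hφ : ∃ C : ℝ, ∀ u, ‖φ u‖ ≤ C) (hyc : ContinuousOn y (Icc t0 α))
    (hzc : ContinuousOn z (Icc t0 α)) (hy : ∀ t ∈ Icc t0 α, y t = picard n f t0 φ y t)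
    (hz : ∀ t ∈ Icc t0 α, z t = picard n f t0 φ z t) :
    ∀ t ∈ Icc t0 α, y t = z t := by
  obtain ⟨Cφ, hCφ⟩ := hφ
  obtain ⟨Cy, hCy⟩ := isCompact_Icc.exists_bound_of_continuousOn hyc
  obtain ⟨Cz, hCz⟩ := isCompact_Icc.exists_bound_of_continuousOn hzc
  set ρ := max Cφ (max Cy Cz) + 1 with hρ_def
  have hρφ : ∀ u, ‖φ u‖ ≤ ρ := fun u => by
    linarith [hCφ u, le_max_left Cφ (max Cy Cz)]
  have hρy : ∀ t ∈ Icc t0 α, ‖y t‖ ≤ ρ := fun t ht => by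
    linarith [hCy t ht, le_max_left Cy Cz, le_max_right Cφ (max Cy Cz)]
  have hρz : ∀ t ∈ Icc t0 α, ‖z t‖ ≤ ρ := fun t ht => by
    linarith [hCz t ht, le_max_right Cy Cz, le_max_right Cφ (max Cy Cz)]
  have hρ : 0 < ρ := by linarith [norm_nonneg (φ 0), hCφ 0, le_max_left Cφ (max Cy Cz)]
  obtain ⟨L, hL, C, -, hloc⟩ := exists_ae_historyLipschitz_and_norm_le hLip hf0 ht0 hρ hα
  obtain ⟨hLipα, hCα⟩ := hloc α le_rfl
  have hIy := integrableOn_apply_seg15 hLipα hCα hL hρφ hρy (hmeas y hyc)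
  have hIz := integrableOn_apply_seg15 hLipα hCα hL hρφ hρz (hmeas z hzc)
  have hdist := nonpos_of_le_mul_integral_of_monotoneOn (d := fun t => ‖y t - z t‖) hL
    (by positivity) (fun t ht => (norm_sub_le _ _).trans (add_le_add (hρy t ht) (hρz t ht)))
    fun t ht B hB hyz => by
      rw [hy t ht, hz t ht]
      exact norm_picard_sub_picard_le hLipα hL hρφ hρy hρz hIy hIz ht hB hyz
  exact fun t ht => sub_eq_zero.1 (norm_le_zero_iff.1 (hdist t ht))

end Picard

theorem stmt_15_general (n : ℕ) (θ : ℝ)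
    (f : ℝ → (ℝ → (Fin n → ℝ)) → (Fin n → ℝ))
    (hLip : ∀ R > (0 : ℝ), ∀ T > (0 : ℝ), ∃ L ≥ (0 : ℝ),
      ∀ᵐ t ∂(volume.restrict (Set.Icc 0 T)), ∀ ψ1 ψ2 : ℝ → (Fin n → ℝ),
        (∀ u ∈ Set.Icc (-θ) 0, ‖ψ1 u‖ ≤ R) → (∀ u ∈ Set.Icc (-θ) 0, ‖ψ2 u‖ ≤ R) →
        ‖f t ψ1 - f t ψ2‖ ≤ L * sSup ((fun u => ‖ψ1 u - ψ2 u‖) '' Set.Icc (-θ) 0))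
    (hf0 : ∀ T > (0 : ℝ), ∃ C : ℝ, ∀ᵐ t ∂(volume.restrict (Set.Icc 0 T)), ‖f t 0‖ ≤ C)
    (hfmeas : ∀ t0 ≥ (0 : ℝ), ∀ T > t0, ∀ φ : ℝ → (Fin n → ℝ), Measurable φ →
      (∃ C : ℝ, ∀ u, ‖φ u‖ ≤ C) → ∀ x : ℝ → (Fin n → ℝ), ContinuousOn x (Set.Icc t0 T) →
      AEMeasurable (fun t => f t (seg15 n t0 φ x t)) (volume.restrict (Set.Icc t0 T)))
    (t0 : ℝ) (ht0 : 0 ≤ t0) (φ : ℝ → (Fin n → ℝ)) (hφm : Measurable φ)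
    (hφb : ∃ C : ℝ, ∀ u, ‖φ u‖ ≤ C) :
    ∃ α > t0, ∃ R > (0 : ℝ), ∃ κ ∈ Set.Ico (0 : ℝ) 1,
      -- the Picard operator maps the closed ball of radius R into itself ...
      (∀ y : ℝ → (Fin n → ℝ), ContinuousOn y (Set.Icc t0 α) →
        (∀ t ∈ Set.Icc t0 α, ‖y t‖ ≤ R) →
        ∀ t ∈ Set.Icc t0 α,
          ‖φ 0 + ∫ s in t0..t, f s (seg15 n t0 φ y s)‖ ≤ R) ∧
      -- ... and is a contraction there ...
      (∀ y z : ℝ → (Fin n → ℝ), ContinuousOn y (Set.Icc t0 α) →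
        ContinuousOn z (Set.Icc t0 α) →
        (∀ t ∈ Set.Icc t0 α, ‖y t‖ ≤ R) → (∀ t ∈ Set.Icc t0 α, ‖z t‖ ≤ R) →
        ∀ t ∈ Set.Icc t0 α,
          ‖(φ 0 + ∫ s in t0..t, f s (seg15 n t0 φ y s)) -
              (φ 0 + ∫ s in t0..t, f s (seg15 n t0 φ z s))‖ ≤
            κ * sSup ((fun r => ‖y r - z r‖) '' Set.Icc t0 α)) ∧
      -- ... hence the equation has a unique local solution.
      ∃ x : ℝ → (Fin n → ℝ), ContinuousOn x (Set.Icc t0 α) ∧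
        (∀ t ∈ Set.Icc t0 α, x t = φ 0 + ∫ s in t0..t, f s (seg15 n t0 φ x s)) ∧
        ∀ y : ℝ → (Fin n → ℝ), ContinuousOn y (Set.Icc t0 α) →
          (∀ t ∈ Set.Icc t0 α, y t = φ 0 + ∫ s in t0..t, f s (seg15 n t0 φ y s)) →
          ∀ t ∈ Set.Icc t0 α, y t = x t := by
  obtain ⟨Cφ, hCφ⟩ := hφb
  have hR : 0 < Cφ + 1 := by linarith [(norm_nonneg _).trans (hCφ 0)]
  have hφR : ∀ u, ‖φ u‖ ≤ Cφ + 1 := fun u => by linarith [hCφ u]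
  obtain ⟨L, hL, C, hC, hloc⟩ :=
    exists_ae_historyLipschitz_and_norm_le hLip hf0 ht0 hR (lt_add_one t0)
  obtain ⟨ε, hε, hε1, hLε, hMε⟩ :=
    exists_pos_le_one_mul_lt_one hL (by positivity : 0 ≤ C + L * (Cφ + 1))
  set α := t0 + ε
  have hαt0 : α - t0 = ε := add_sub_cancel_left t0 ε
  obtain ⟨hLipα, hCα⟩ := hloc α (by linarith)
  have hmeas := hfmeas t0 ht0 α (by linarith) φ hφm ⟨Cφ, hCφ⟩
  have hI {y} (hyc : ContinuousOn y (Icc t0 α)) (hy : ∀ t ∈ Icc t0 α, ‖y t‖ ≤ Cφ + 1) :=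
    integrableOn_apply_seg15 hLipα hCα hL hφR hy (hmeas y hyc)
  have hself y (_ : ContinuousOn y (Icc t0 α)) (hy : ∀ t ∈ Icc t0 α, ‖y t‖ ≤ Cφ + 1) :=
    norm_picard_le hLipα hCα hL hC hφR (by rw [hαt0]; linarith [hCφ 0]) hy
  have hcontr y z (hyc : ContinuousOn y (Icc t0 α)) (hzc : ContinuousOn z (Icc t0 α))
      (hy : ∀ t ∈ Icc t0 α, ‖y t‖ ≤ Cφ + 1) (hz : ∀ t ∈ Icc t0 α, ‖z t‖ ≤ Cφ + 1) D
      (hD : ∀ t ∈ Icc t0 α, ‖y t - z t‖ ≤ D) :=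
    hαt0 ▸ norm_picard_sub_picard_le_of_le hLipα hL hφR hy hz (hI hyc hy) (hI hzc hz) hD
  obtain ⟨x, hxc, hx⟩ := exists_fixedPoint_of_contraction_on_Icc (by linarith) hR.le
    (by positivity) hLε (picard n f t0 φ)
    (fun y hyc hy => continuousOn_picard (by linarith) (hI hyc hy)) hself hcontr
  refine ⟨α, by linarith, Cφ + 1, hR, L * ε, ⟨by positivity, hLε⟩, hself,
    fun y z hyc hzc hy hz => hcontr y z hyc hzc hy hz _ fun r hr => le_csSup ?_ ⟨r, hr, rfl⟩,
    x, hxc, hx, fun y hyc hy =>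
      picard_fixedPoint_unique hLip hf0 ht0 (by linarith) hmeas ⟨Cφ, hCφ⟩ hyc hxc hy hx⟩
  exact (isCompact_Icc.image_of_continuousOn (hyc.sub hzc).norm).bddAbove

/-- Local existence and uniqueness for the delay differential equation
`ẋ(t) = f(t, (φ ⋄_{t0} x)_t)`, `x(t0) = φ(0)`: under local Lipschitz continuity of `f`
in the history (sup norm), local essential boundedness of `f(·,0)` and measurability
along continuous trajectories, the Picard operator
`(Py)(t) = φ(0) + ∫_{t0}^t f(s,(φ⋄_{t0}y)_s) ds` is a contraction on a suitable closed
ball of `C([t0,α],ℝⁿ)` and the equation has a unique local solution there. -/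
theorem stmt_15 (n : ℕ) (θ : ℝ) (hθ : 0 < θ)
    (f : ℝ → (ℝ → (Fin n → ℝ)) → (Fin n → ℝ))
    (hLip : ∀ R > (0 : ℝ), ∀ T > (0 : ℝ), ∃ L ≥ (0 : ℝ),
      ∀ᵐ t ∂(volume.restrict (Set.Icc 0 T)), ∀ ψ1 ψ2 : ℝ → (Fin n → ℝ),
        (∀ u ∈ Set.Icc (-θ) 0, ‖ψ1 u‖ ≤ R) → (∀ u ∈ Set.Icc (-θ) 0, ‖ψ2 u‖ ≤ R) →
        ‖f t ψ1 - f t ψ2‖ ≤ L * sSup ((fun u => ‖ψ1 u - ψ2 u‖) '' Set.Icc (-θ) 0))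
    (hf0 : ∀ T > (0 : ℝ), ∃ C : ℝ, ∀ᵐ t ∂(volume.restrict (Set.Icc 0 T)), ‖f t 0‖ ≤ C)
    (hfmeas : ∀ t0 ≥ (0 : ℝ), ∀ T > t0, ∀ φ : ℝ → (Fin n → ℝ), Measurable φ →
      (∃ C : ℝ, ∀ u, ‖φ u‖ ≤ C) → ∀ x : ℝ → (Fin n → ℝ), ContinuousOn x (Set.Icc t0 T) →
      AEMeasurable (fun t => f t (seg15 n t0 φ x t)) (volume.restrict (Set.Icc t0 T)))
    (t0 : ℝ) (ht0 : 0 ≤ t0) (φ : ℝ → (Fin n → ℝ)) (hφm : Measurable φ)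
    (hφb : ∃ C : ℝ, ∀ u, ‖φ u‖ ≤ C) :
    ∃ α > t0, ∃ R > (0 : ℝ), ∃ κ ∈ Set.Ico (0 : ℝ) 1,
      -- the Picard operator maps the closed ball of radius R into itself ...
      (∀ y : ℝ → (Fin n → ℝ), ContinuousOn y (Set.Icc t0 α) →
        (∀ t ∈ Set.Icc t0 α, ‖y t‖ ≤ R) →
        ∀ t ∈ Set.Icc t0 α,
          ‖φ 0 + ∫ s in t0..t, f s (seg15 n t0 φ y s)‖ ≤ R) ∧
      -- ... and is a contraction there ...
      (∀ y z : ℝ → (Fin n → ℝ), ContinuousOn y (Set.Icc t0 α) →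
        ContinuousOn z (Set.Icc t0 α) →
        (∀ t ∈ Set.Icc t0 α, ‖y t‖ ≤ R) → (∀ t ∈ Set.Icc t0 α, ‖z t‖ ≤ R) →
        ∀ t ∈ Set.Icc t0 α,
          ‖(φ 0 + ∫ s in t0..t, f s (seg15 n t0 φ y s)) -
              (φ 0 + ∫ s in t0..t, f s (seg15 n t0 φ z s))‖ ≤
            κ * sSup ((fun r => ‖y r - z r‖) '' Set.Icc t0 α)) ∧
      -- ... hence the equation has a unique local solution.
      ∃ x : ℝ → (Fin n → ℝ), ContinuousOn x (Set.Icc t0 α) ∧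
        (∀ t ∈ Set.Icc t0 α, x t = φ 0 + ∫ s in t0..t, f s (seg15 n t0 φ x s)) ∧
        ∀ y : ℝ → (Fin n → ℝ), ContinuousOn y (Set.Icc t0 α) →
          (∀ t ∈ Set.Icc t0 α, y t = φ 0 + ∫ s in t0..t, f s (seg15 n t0 φ y s)) →
          ∀ t ∈ Set.Icc t0 α, y t = x t :=
  stmt_15_general n θ f hLip hf0 hfmeas t0 ht0 φ hφm hφb
end

section
/- Let f(t, ξ_{0:ℓ}, φ) be locally Lipschitz in (ξ_{0:ℓ}, φ) (with L^∞ norm on φ) uniformly for a.e. t in compacts. If φ¹, φ² ∈ 𝓛^∞([−θ,0],ℝⁿ) are bounded, satisfy ‖φ¹ − φ²‖ = 0 (equal almost everywhere) and φ¹(0) = φ²(0), then the corresponding maximal solutions of ẋ(t) = f(t, 𝗑(t−τ₀),…,𝗑(t−τ_ℓ), 𝗑_t) with 𝗑 = φⁱ ⋄_{t0} x, τ₀ = 0, coincide. -/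
open MeasureTheory Set Filter
open scoped ENNReal

/-- Concatenation `φ ⋄_{t0} x` of an initial history `φ` (shifted to `[t0−θ,t0)`)
with a trajectory `x`. -/
noncomputable def conc18 (n : ℕ) (t0 : ℝ) (φ x : ℝ → (Fin n → ℝ)) (t : ℝ) : Fin n → ℝ :=
  if t < t0 then φ (t - t0) else x t

/-- `x` solves `ẋ(t) = f(t, 𝗑(t−τ₀),…,𝗑(t−τ_ℓ), 𝗑_t)` with `𝗑 = φ ⋄_{t0} x`,
`x(t0) = φ(0)`, on `[t0,Tx)` (integral-equation form). -/
def IsSolOn18 (n ℓ : ℕ)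
    (f : ℝ → (Fin (ℓ + 1) → (Fin n → ℝ)) → (ℝ → (Fin n → ℝ)) → (Fin n → ℝ))
    (τ : Fin (ℓ + 1) → ℝ) (t0 : ℝ) (φ x : ℝ → (Fin n → ℝ)) (Tx : ℝ≥0∞) : Prop :=
  ENNReal.ofReal t0 < Tx ∧
  ContinuousOn x {t : ℝ | t0 ≤ t ∧ ENNReal.ofReal t < Tx} ∧
  ∀ t, t0 ≤ t → ENNReal.ofReal t < Tx →
    x t = φ 0 + ∫ s in t0..t,
      f s (fun i => conc18 n t0 φ x (s - τ i)) (fun u => conc18 n t0 φ x (s + u))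

/-- A maximally defined solution. -/
def IsMaxSolOn18 (n ℓ : ℕ)
    (f : ℝ → (Fin (ℓ + 1) → (Fin n → ℝ)) → (ℝ → (Fin n → ℝ)) → (Fin n → ℝ))
    (τ : Fin (ℓ + 1) → ℝ) (t0 : ℝ) (φ x : ℝ → (Fin n → ℝ)) (Tx : ℝ≥0∞) : Prop :=
  IsSolOn18 n ℓ f τ t0 φ x Tx ∧
  ∀ y : ℝ → (Fin n → ℝ), ∀ Ty : ℝ≥0∞, IsSolOn18 n ℓ f τ t0 φ y Ty →
    (∀ t, t0 ≤ t → ENNReal.ofReal t < Tx → y t = x t) → Ty ≤ Tx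

/-! For `t ≥ t0` the right-hand sides built from `φ¹` and `φ²` agree for almost every `t`: the
discrete delays read `φⁱ` at `t − τᵢ − t0`, which for a.e. `t` avoids the null set where `φ¹ ≠ φ²`,
and the distributed delay only sees the a.e. class of the history. So a solution for `φ¹` is a
solution for `φ²` and vice versa. Solutions for a fixed history are unique: on a step of length
`ε` with `L ε ≤ 1/2` the Lipschitz estimate bounds the maximum `M` of `‖x − y‖` by `M / 2`.
Maximality then forces the two lifespans to be equal. -/

noncomputable def delayField (n ℓ : ℕ)
    (f : ℝ → (Fin (ℓ + 1) → (Fin n → ℝ)) → (ℝ → (Fin n → ℝ)) → (Fin n → ℝ))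
    (τ : Fin (ℓ + 1) → ℝ) (t0 : ℝ) (φ x : ℝ → (Fin n → ℝ)) (s : ℝ) : Fin n → ℝ :=
  f s (fun i => conc18 n t0 φ x (s - τ i)) (fun u => conc18 n t0 φ x (s + u))

def DelayLipschitzAt {n ℓ : ℕ} (θ : ℝ)
    (f : ℝ → (Fin (ℓ + 1) → (Fin n → ℝ)) → (ℝ → (Fin n → ℝ)) → (Fin n → ℝ))
    (R L t : ℝ) : Prop :=
  ∀ ξ ζ : Fin (ℓ + 1) → (Fin n → ℝ), (∀ i, ‖ξ i‖ ≤ R) → (∀ i, ‖ζ i‖ ≤ R) →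
    ∀ φ ψ : ℝ → (Fin n → ℝ),
      AEStronglyMeasurable φ (volume.restrict (Icc (-θ) 0)) →
      AEStronglyMeasurable ψ (volume.restrict (Icc (-θ) 0)) →
      eLpNorm φ ⊤ (volume.restrict (Icc (-θ) 0)) ≤ ENNReal.ofReal R →
      eLpNorm ψ ⊤ (volume.restrict (Icc (-θ) 0)) ≤ ENNReal.ofReal R →
      ‖f t ξ φ - f t ζ ψ‖ ≤ L * max (⨆ i, ‖ξ i - ζ i‖)
        (eLpNorm (fun s => φ s - ψ s) ⊤ (volume.restrict (Icc (-θ) 0))).toReal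

theorem eLpNorm_top_restrict_le {α E : Type*} [MeasurableSpace α] [NormedAddCommGroup E]
    {μ : Measure α} {s : Set α} (hs : MeasurableSet s) {g : α → E} {C : ℝ}
    (h : ∀ u ∈ s, ‖g u‖ ≤ C) : eLpNorm g ⊤ (μ.restrict s) ≤ ENNReal.ofReal C := by
  rw [eLpNorm_exponent_top]
  exact eLpNormEssSup_le_of_ae_bound ((ae_restrict_iff' hs).2 (Eventually.of_forall h))

theorem Icc_subset_of_step {s : Set ℝ} {a b ε : ℝ} (hε : 0 < ε) (ha : a ∈ s)
    (hstep : ∀ c ∈ Icc a b, Icc a c ⊆ s → Icc a (min (c + ε) b) ⊆ s) : Icc a b ⊆ s := by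
  intro r hr
  have hab : a ≤ b := hr.1.trans hr.2
  have hsteps : ∀ m : ℕ, Icc a (min (a + m * ε) b) ⊆ s := by
    intro m
    induction m with
    | zero =>
      intro r hr
      rwa [le_antisymm (hr.2.trans (by simp)) hr.1]
    | succ m ih =>
      refine (Icc_subset_Icc_right ?_).trans
        (hstep _ ⟨le_min (by nlinarith [m.cast_nonneg (α := ℝ)]) hab, min_le_right _ _⟩ ih)
      push_cast
      refine le_min ?_ (min_le_right _ _)
      rw [← min_add_add_right]
      exact min_le_min (by linarith) (by linarith)
  obtain ⟨m, hm⟩ := exists_nat_ge ((b - a) / ε)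
  refine hsteps m ⟨hr.1, hr.2.trans (le_min ?_ le_rfl)⟩
  rw [div_le_iff₀ hε] at hm
  linarith

theorem eqOn_Icc_of_norm_sub_le {E : Type*} [NormedAddCommGroup E] {x y : ℝ → E} {a T K : ℝ}
    (hx : ContinuousOn x (Icc a T)) (hy : ContinuousOn y (Icc a T)) (ha : x a = y a)
    (hle : ∀ c t M, a ≤ c → c ≤ t → t ≤ T → EqOn x y (Icc a c) →
      (∀ r ∈ Icc a t, ‖x r - y r‖ ≤ M) → ‖x t - y t‖ ≤ K * M * (t - c)) :
    EqOn x y (Icc a T) := by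
  set ε : ℝ := 1 / (2 * (|K| + 1)) with hε_def
  have hε : 0 < ε := by positivity
  have hKε : |K| * ε ≤ 1 / 2 := by
    rw [hε_def, mul_one_div, div_le_div_iff₀ (by positivity) two_pos]
    linarith
  refine Icc_subset_of_step hε ha fun c hc hxy => ?_
  set b := min (c + ε) T
  have hcb : c ≤ b := le_min (by linarith) hc.2
  have hdist : ContinuousOn (fun r => ‖x r - y r‖) (Icc c b) := by
    have hsub : Icc c b ⊆ Icc a T := Icc_subset_Icc hc.1 (min_le_right _ _)
    exact ((hx.mono hsub).sub (hy.mono hsub)).norm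
  obtain ⟨r₀, hr₀, hmax⟩ := isCompact_Icc.exists_isMaxOn (nonempty_Icc.2 hcb) hdist
  set M := ‖x r₀ - y r₀‖
  have hM : ∀ r ∈ Icc a b, ‖x r - y r‖ ≤ M := by
    intro r hr
    rcases le_or_gt r c with h | h
    · rw [hxy ⟨hr.1, h⟩, sub_self, norm_zero]
      exact norm_nonneg _
    · exact hmax ⟨h.le, hr.2⟩
  have hMle : M ≤ K * M * (r₀ - c) :=
    hle c r₀ M hc.1 hr₀.1 (hr₀.2.trans (min_le_right _ _)) hxy
      fun r hr => hM r ⟨hr.1, hr.2.trans hr₀.2⟩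
  have hstep_small : K * (r₀ - c) ≤ 1 / 2 := by
    have h₁ : r₀ - c ≤ ε := by linarith [hr₀.2.trans (min_le_left _ _)]
    have h₂ : 0 ≤ r₀ - c := by linarith [hr₀.1]
    nlinarith [le_abs_self K, abs_nonneg K]
  have hM0 : M ≤ 0 := by nlinarith [norm_nonneg (x r₀ - y r₀)]
  intro r hr
  exact sub_eq_zero.1 (norm_le_zero_iff.1 ((hM r hr).trans hM0))

section DelayField

variable {n ℓ : ℕ} {f : ℝ → (Fin (ℓ + 1) → (Fin n → ℝ)) → (ℝ → (Fin n → ℝ)) → (Fin n → ℝ)}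
  {τ : Fin (ℓ + 1) → ℝ} {θ t0 : ℝ} {φ ψ x y : ℝ → (Fin n → ℝ)}

theorem conc18_sub_conc18 (v : ℝ) :
    conc18 n t0 φ x v - conc18 n t0 ψ y v = conc18 n t0 (φ - ψ) (x - y) v := by
  unfold conc18
  split_ifs <;> rfl

theorem conc18_zero : conc18 n t0 0 0 = 0 := by
  funext v
  simp [conc18]

theorem delayField_zero : delayField n ℓ f τ t0 0 0 = fun s => f s (fun _ => 0) 0 := by
  funext s
  simp only [delayField, conc18_zero, Pi.zero_apply]
  rfl

theorem norm_conc18_le {T R : ℝ} (hφ : ∀ u, ‖φ u‖ ≤ R) (hx : ∀ r ∈ Icc t0 T, ‖x r‖ ≤ R)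
    {v : ℝ} (hv : v ≤ T) : ‖conc18 n t0 φ x v‖ ≤ R := by
  unfold conc18
  split_ifs with h
  · exact hφ _
  · exact hx v ⟨le_of_not_gt h, hv⟩

theorem aestronglyMeasurable_conc18_comp_add {T s : ℝ} (hφ : Measurable φ)
    (hx : ContinuousOn x (Icc t0 T)) (hs : s ≤ T) :
    AEStronglyMeasurable (fun u => conc18 n t0 φ x (s + u)) (volume.restrict (Icc (-θ) 0)) := by
  have hsplit : Icc (-θ) 0 = (Icc (-θ) 0 ∩ Iio (t0 - s)) ∪ (Icc (-θ) 0 ∩ Ici (t0 - s)) := by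
    rw [← inter_union_distrib_left, Iio_union_Ici, inter_univ]
  have hpast : MeasurableSet (Icc (-θ) (0 : ℝ) ∩ Iio (t0 - s)) :=
    measurableSet_Icc.inter measurableSet_Iio
  have hfuture : MeasurableSet (Icc (-θ) (0 : ℝ) ∩ Ici (t0 - s)) :=
    measurableSet_Icc.inter measurableSet_Ici
  rw [hsplit, aestronglyMeasurable_union_iff]
  constructor
  · refine (hφ.comp (measurable_const_add s |>.sub_const t0)).aestronglyMeasurable.congr ?_
    filter_upwards [self_mem_ae_restrict hpast] with u hu
    have h : s + u < t0 := by linarith [hu.2.out]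
    simp [conc18, h]
  · have hcont : ContinuousOn (fun u => x (s + u)) (Icc (-θ) 0 ∩ Ici (t0 - s)) :=
      hx.comp (continuous_const_add s).continuousOn fun u hu =>
        ⟨by linarith [hu.2.out], by linarith [hu.1.2]⟩
    refine (hcont.aestronglyMeasurable hfuture).congr ?_
    filter_upwards [self_mem_ae_restrict hfuture] with u hu
    have h : ¬ s + u < t0 := by linarith [hu.2.out]
    simp [conc18, h]

theorem DelayLipschitzAt.norm_sub_le {R L M t : ℝ} (h : DelayLipschitzAt θ f R L t)
    (hL : 0 ≤ L) {ξ ζ : Fin (ℓ + 1) → (Fin n → ℝ)} (hξ : ∀ i, ‖ξ i‖ ≤ R)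
    (hζ : ∀ i, ‖ζ i‖ ≤ R) (hφm : AEStronglyMeasurable φ (volume.restrict (Icc (-θ) 0)))
    (hψm : AEStronglyMeasurable ψ (volume.restrict (Icc (-θ) 0)))
    (hφ : ∀ u ∈ Icc (-θ) 0, ‖φ u‖ ≤ R) (hψ : ∀ u ∈ Icc (-θ) 0, ‖ψ u‖ ≤ R)
    (hξζ : ∀ i, ‖ξ i - ζ i‖ ≤ M) (hφψ : ∀ u ∈ Icc (-θ) 0, ‖φ u - ψ u‖ ≤ M) :
    ‖f t ξ φ - f t ζ ψ‖ ≤ L * M := by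
  have hM : 0 ≤ M := (norm_nonneg _).trans (hξζ 0)
  refine (h ξ ζ hξ hζ φ ψ hφm hψm (eLpNorm_top_restrict_le measurableSet_Icc hφ)
    (eLpNorm_top_restrict_le measurableSet_Icc hψ)).trans ?_
  refine mul_le_mul_of_nonneg_left (max_le (ciSup_le hξζ) ?_) hL
  exact ENNReal.toReal_le_of_le_ofReal hM (eLpNorm_top_restrict_le measurableSet_Icc hφψ)

theorem DelayLipschitzAt.norm_delayField_sub_le {R L M s T : ℝ}
    (h : DelayLipschitzAt θ f R L s) (hL : 0 ≤ L) (hτ : ∀ i, 0 ≤ τ i) (hs : s ≤ T)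
    (hφm : Measurable φ) (hψm : Measurable ψ) (hφ : ∀ u, ‖φ u‖ ≤ R) (hψ : ∀ u, ‖ψ u‖ ≤ R)
    (hxc : ContinuousOn x (Icc t0 T)) (hyc : ContinuousOn y (Icc t0 T))
    (hx : ∀ r ∈ Icc t0 T, ‖x r‖ ≤ R) (hy : ∀ r ∈ Icc t0 T, ‖y r‖ ≤ R)
    (hφψ : ∀ u, ‖φ u - ψ u‖ ≤ M) (hxy : ∀ r ∈ Icc t0 T, ‖x r - y r‖ ≤ M) :
    ‖delayField n ℓ f τ t0 φ x s - delayField n ℓ f τ t0 ψ y s‖ ≤ L * M := by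
  have hconc : ∀ v ≤ T, ‖conc18 n t0 φ x v - conc18 n t0 ψ y v‖ ≤ M := fun v hv => by
    rw [conc18_sub_conc18]
    exact norm_conc18_le hφψ hxy hv
  have hdisc : ∀ i, s - τ i ≤ T := fun i => by linarith [hτ i]
  have hhist : ∀ u ∈ Icc (-θ) (0 : ℝ), s + u ≤ T := fun u hu => by linarith [hu.2]
  exact h.norm_sub_le hL (fun i => norm_conc18_le hφ hx (hdisc i))
    (fun i => norm_conc18_le hψ hy (hdisc i)) (aestronglyMeasurable_conc18_comp_add hφm hxc hs)
    (aestronglyMeasurable_conc18_comp_add hψm hyc hs)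
    (fun u hu => norm_conc18_le hφ hx (hhist u hu)) (fun u hu => norm_conc18_le hψ hy (hhist u hu))
    (fun i => hconc _ (hdisc i)) (fun u hu => hconc _ (hhist u hu))

theorem integrableOn_delayField {T R L C : ℝ} (hτ : ∀ i, 0 ≤ τ i) (hL : 0 ≤ L)
    (hLip : ∀ᵐ s ∂volume.restrict (Icc t0 T), DelayLipschitzAt θ f R L s)
    (hf0 : ∀ᵐ s ∂volume.restrict (Icc t0 T), ‖f s (fun _ => 0) 0‖ ≤ C)
    (hmeas : AEStronglyMeasurable (delayField n ℓ f τ t0 φ x) (volume.restrict (Icc t0 T)))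
    (hφm : Measurable φ) (hφ : ∀ u, ‖φ u‖ ≤ R)
    (hxc : ContinuousOn x (Icc t0 T)) (hx : ∀ r ∈ Icc t0 T, ‖x r‖ ≤ R) :
    IntegrableOn (delayField n ℓ f τ t0 φ x) (Icc t0 T) := by
  have hR : 0 ≤ R := (norm_nonneg _).trans (hφ 0)
  refine Integrable.mono' (integrable_const (L * R + C)) hmeas ?_
  filter_upwards [hLip, hf0, self_mem_ae_restrict measurableSet_Icc] with s hs hs0 hsT
  have hdiff := hs.norm_delayField_sub_le (ψ := 0) (y := 0) hL hτ hsT.2 hφm measurable_const hφ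
    (by simpa using hR) hxc continuousOn_const hx (fun _ _ => by simpa using hR) (by simpa using hφ)
    (by simpa using hx)
  rw [delayField_zero] at hdiff
  linarith [norm_le_insert' (delayField n ℓ f τ t0 φ x s) (f s (fun _ => 0) 0)]

end DelayField

section Solutions

variable {n ℓ : ℕ} {f : ℝ → (Fin (ℓ + 1) → (Fin n → ℝ)) → (ℝ → (Fin n → ℝ)) → (Fin n → ℝ)}
  {τ : Fin (ℓ + 1) → ℝ} {θ t0 : ℝ} {φ φ1 φ2 x y : ℝ → (Fin n → ℝ)} {Tx Ty : ℝ≥0∞}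

theorem ae_conc18_eq (hae : φ1 =ᵐ[volume.restrict (Icc (-θ) 0)] φ2) :
    ∀ᵐ v, t0 - θ ≤ v → conc18 n t0 φ1 x v = conc18 n t0 φ2 x v := by
  have h := (ae_restrict_iff' measurableSet_Icc).1 hae
  filter_upwards [(measurePreserving_sub_right volume t0).quasiMeasurePreserving.ae h]
    with v hv hvθ
  unfold conc18
  split_ifs with hvt0
  · exact hv ⟨by linarith, by linarith⟩
  · rfl

theorem ae_delayField_eq (hτ : ∀ i, τ i ≤ θ)
    (hclass : ∀ t : ℝ, ∀ ξ : Fin (ℓ + 1) → (Fin n → ℝ), ∀ φ ψ : ℝ → (Fin n → ℝ),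
      φ =ᵐ[volume.restrict (Icc (-θ) 0)] ψ → f t ξ φ = f t ξ ψ)
    (hae : φ1 =ᵐ[volume.restrict (Icc (-θ) 0)] φ2) :
    ∀ᵐ s, t0 ≤ s → delayField n ℓ f τ t0 φ1 x s = delayField n ℓ f τ t0 φ2 x s := by
  have hconc := ae_conc18_eq (t0 := t0) (x := x) hae
  have hdisc : ∀ᵐ s, ∀ i, t0 - θ ≤ s - τ i →
      conc18 n t0 φ1 x (s - τ i) = conc18 n t0 φ2 x (s - τ i) :=
    ae_all_iff.2 fun i =>
      (measurePreserving_sub_right volume (τ i)).quasiMeasurePreserving.ae hconc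
  filter_upwards [hdisc] with s hs hts
  have hξ : (fun i => conc18 n t0 φ1 x (s - τ i)) = fun i => conc18 n t0 φ2 x (s - τ i) :=
    funext fun i => hs i (by linarith [hτ i])
  have hhist : (fun u => conc18 n t0 φ1 x (s + u))
      =ᵐ[volume.restrict (Icc (-θ) 0)] fun u => conc18 n t0 φ2 x (s + u) := by
    have hshift := (measurePreserving_add_left volume s).quasiMeasurePreserving.ae hconc
    filter_upwards [ae_restrict_of_ae hshift, self_mem_ae_restrict measurableSet_Icc]
      with u hu hu'
    exact hu (by linarith [hu'.1])
  rw [delayField, hξ]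
  exact hclass s _ _ _ hhist

theorem IsSolOn18.of_ae_delayField_eq (h : IsSolOn18 n ℓ f τ t0 φ1 x Tx) (h0 : φ1 0 = φ2 0)
    (hF : ∀ᵐ s, t0 ≤ s → delayField n ℓ f τ t0 φ1 x s = delayField n ℓ f τ t0 φ2 x s) :
    IsSolOn18 n ℓ f τ t0 φ2 x Tx := by
  refine ⟨h.1, h.2.1, fun t ht htT => ?_⟩
  rw [h.2.2 t ht htT, h0]
  congr 1
  refine intervalIntegral.integral_congr_ae ?_
  filter_upwards [hF] with s hs hst
  rw [uIoc_of_le ht] at hst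
  exact hs hst.1.le

theorem IsSolOn18.apply_self (h : IsSolOn18 n ℓ f τ t0 φ x Tx) : x t0 = φ 0 := by
  simpa using h.2.2 t0 le_rfl h.1

theorem IsSolOn18.continuousOn_Icc (h : IsSolOn18 n ℓ f τ t0 φ x Tx) {T : ℝ}
    (hT : ENNReal.ofReal T < Tx) : ContinuousOn x (Icc t0 T) :=
  h.2.1.mono fun _ hr => ⟨hr.1, (ENNReal.ofReal_le_ofReal hr.2).trans_lt hT⟩

theorem IsSolOn18.sub_eq_integral (h : IsSolOn18 n ℓ f τ t0 φ x Tx) {T : ℝ}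
    (hT : ENNReal.ofReal T < Tx) (hI : IntegrableOn (delayField n ℓ f τ t0 φ x) (Icc t0 T))
    {c t : ℝ} (hc : c ∈ Icc t0 T) (ht : t ∈ Icc t0 T) :
    x t - x c = ∫ s in c..t, delayField n ℓ f τ t0 φ x s := by
  have hint : ∀ r ∈ Icc t0 T, IntervalIntegrable (delayField n ℓ f τ t0 φ x) volume t0 r :=
    fun r hr =>
      (hI.mono_set (uIcc_subset_Icc (left_mem_Icc.2 (hr.1.trans hr.2)) hr)).intervalIntegrable
  rw [h.2.2 t ht.1 ((ENNReal.ofReal_le_ofReal ht.2).trans_lt hT),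
    h.2.2 c hc.1 ((ENNReal.ofReal_le_ofReal hc.2).trans_lt hT), add_sub_add_left_eq_sub]
  exact intervalIntegral.integral_interval_sub_left (hint t ht) (hint c hc)

theorem IsSolOn18.norm_sub_le {T R L : ℝ} (hx : IsSolOn18 n ℓ f τ t0 φ x Tx)
    (hy : IsSolOn18 n ℓ f τ t0 φ y Ty) (hTx : ENNReal.ofReal T < Tx)
    (hTy : ENNReal.ofReal T < Ty) (hτ : ∀ i, 0 ≤ τ i) (hL : 0 ≤ L)
    (hLip : ∀ᵐ s ∂volume.restrict (Icc t0 T), DelayLipschitzAt θ f R L s)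
    (hφm : Measurable φ) (hφ : ∀ u, ‖φ u‖ ≤ R)
    (hxR : ∀ r ∈ Icc t0 T, ‖x r‖ ≤ R) (hyR : ∀ r ∈ Icc t0 T, ‖y r‖ ≤ R)
    (hxI : IntegrableOn (delayField n ℓ f τ t0 φ x) (Icc t0 T))
    (hyI : IntegrableOn (delayField n ℓ f τ t0 φ y) (Icc t0 T))
    {c t M : ℝ} (hc : t0 ≤ c) (hct : c ≤ t) (htT : t ≤ T) (hxy : x c = y c)
    (hM : ∀ r ∈ Icc t0 t, ‖x r - y r‖ ≤ M) : ‖x t - y t‖ ≤ L * M * (t - c) := by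
  have hcI : c ∈ Icc t0 T := ⟨hc, hct.trans htT⟩
  have htI : t ∈ Icc t0 T := ⟨hc.trans hct, htT⟩
  have hsub : Icc t0 t ⊆ Icc t0 T := Icc_subset_Icc_right htT
  have hdiff : x t - y t = ∫ s in c..t,
      (delayField n ℓ f τ t0 φ x s - delayField n ℓ f τ t0 φ y s) := by
    have hIcc : uIcc c t ⊆ Icc t0 T := uIcc_subset_Icc hcI htI
    rw [intervalIntegral.integral_sub (hxI.mono_set hIcc).intervalIntegrable
      (hyI.mono_set hIcc).intervalIntegrable, ← hx.sub_eq_integral hTx hxI hcI htI,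
      ← hy.sub_eq_integral hTy hyI hcI htI, hxy, sub_sub_sub_cancel_right]
  have hbound : ∀ᵐ s, s ∈ uIoc c t →
      ‖delayField n ℓ f τ t0 φ x s - delayField n ℓ f τ t0 φ y s‖ ≤ L * M := by
    filter_upwards [(ae_restrict_iff' measurableSet_Icc).1 hLip] with s hs hsct
    rw [uIoc_of_le hct] at hsct
    exact (hs ⟨hc.trans hsct.1.le, hsct.2.trans htT⟩).norm_delayField_sub_le hL hτ hsct.2
      hφm hφm hφ hφ ((hx.continuousOn_Icc hTx).mono hsub) ((hy.continuousOn_Icc hTy).mono hsub)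
      (fun r hr => hxR r (hsub hr)) (fun r hr => hyR r (hsub hr))
      (fun u => by simpa using (norm_nonneg _).trans (hM t ⟨hc.trans hct, le_rfl⟩)) hM
  rw [hdiff, ← abs_of_nonneg (sub_nonneg.2 hct)]
  exact intervalIntegral.norm_integral_le_of_norm_le_const_ae hbound

theorem IsSolOn18.eqOn (hτ : ∀ i, 0 ≤ τ i)
    (hLip : ∀ R > (0 : ℝ), ∀ T > (0 : ℝ), ∃ L ≥ (0 : ℝ),
      ∀ᵐ t ∂(volume.restrict (Icc 0 T)), DelayLipschitzAt θ f R L t)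
    (hf0 : ∀ T > (0 : ℝ), ∃ C : ℝ, ∀ᵐ t ∂(volume.restrict (Icc 0 T)),
      ‖f t (fun _ => 0) 0‖ ≤ C)
    (hmeas : ∀ T > t0, ∀ x : ℝ → (Fin n → ℝ), ContinuousOn x (Icc t0 T) →
      AEMeasurable (delayField n ℓ f τ t0 φ x) (volume.restrict (Icc t0 T)))
    (ht0 : 0 ≤ t0) (hφm : Measurable φ) (hφb : ∃ C : ℝ, ∀ u, ‖φ u‖ ≤ C)
    (hx : IsSolOn18 n ℓ f τ t0 φ x Tx) (hy : IsSolOn18 n ℓ f τ t0 φ y Ty) {T : ℝ}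
    (hTx : ENNReal.ofReal T < Tx) (hTy : ENNReal.ofReal T < Ty) : EqOn x y (Icc t0 T) := by
  have hxy₀ : x t0 = y t0 := by rw [hx.apply_self, hy.apply_self]
  rcases le_or_gt T t0 with hT | hT
  · intro r hr
    rwa [le_antisymm (hr.2.trans hT) hr.1]
  have hxc := hx.continuousOn_Icc hTx
  have hyc := hy.continuousOn_Icc hTy
  obtain ⟨Cx, hCx⟩ := isCompact_Icc.exists_bound_of_continuousOn hxc
  obtain ⟨Cy, hCy⟩ := isCompact_Icc.exists_bound_of_continuousOn hyc
  obtain ⟨Cφ, hCφ⟩ := hφb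
  set R := max 1 (max Cφ (max Cx Cy))
  have hφR : ∀ u, ‖φ u‖ ≤ R := fun u => (hCφ u).trans (by simp [R])
  have hxR : ∀ r ∈ Icc t0 T, ‖x r‖ ≤ R := fun r hr => (hCx r hr).trans (by simp [R])
  have hyR : ∀ r ∈ Icc t0 T, ‖y r‖ ≤ R := fun r hr => (hCy r hr).trans (by simp [R])
  have hsub : Icc t0 T ⊆ Icc 0 T := Icc_subset_Icc_left ht0
  obtain ⟨L, hL0, hL⟩ := hLip R (by positivity) T (by linarith)
  obtain ⟨C, hC⟩ := hf0 T (by linarith)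
  replace hL := ae_restrict_of_ae_restrict_of_subset hsub hL
  replace hC := ae_restrict_of_ae_restrict_of_subset hsub hC
  have hxI := integrableOn_delayField hτ hL0 hL hC (hmeas T hT x hxc).aestronglyMeasurable
    hφm hφR hxc hxR
  have hyI := integrableOn_delayField hτ hL0 hL hC (hmeas T hT y hyc).aestronglyMeasurable
    hφm hφR hyc hyR
  exact eqOn_Icc_of_norm_sub_le hxc hyc hxy₀ fun c t M hc hct htT hxy hM =>
    hx.norm_sub_le hy hTx hTy hτ hL0 hL hφm hφR hxR hyR hxI hyI hc hct htT (hxy ⟨hc, le_rfl⟩) hM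

theorem IsMaxSolOn18.lifespan_eq {φ1 φ2 x1 x2 : ℝ → (Fin n → ℝ)} {T1 T2 : ℝ≥0∞}
    (hx1 : IsMaxSolOn18 n ℓ f τ t0 φ1 x1 T1) (hx2 : IsMaxSolOn18 n ℓ f τ t0 φ2 x2 T2)
    (h21 : IsSolOn18 n ℓ f τ t0 φ1 x2 T2) (h12 : IsSolOn18 n ℓ f τ t0 φ2 x1 T1)
    (hagree : ∀ t, t0 ≤ t → ENNReal.ofReal t < T1 → ENNReal.ofReal t < T2 → x1 t = x2 t) :
    T1 = T2 := by
  rcases le_total T1 T2 with h | h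
  · exact h.antisymm (hx1.2 x2 T2 h21 fun t ht h1 => (hagree t ht h1 (h1.trans_le h)).symm)
  · exact (hx2.2 x1 T1 h12 fun t ht h2 => hagree t ht (h2.trans_le h) h2).antisymm h

end Solutions

theorem stmt_18_general (n ℓ : ℕ) (θ : ℝ)
    (τ : Fin (ℓ + 1) → ℝ) (hτ0 : τ 0 = 0) (hτmono : StrictMono τ)
    (hτlast : τ (Fin.last ℓ) = θ)
    (f : ℝ → (Fin (ℓ + 1) → (Fin n → ℝ)) → (ℝ → (Fin n → ℝ)) → (Fin n → ℝ))
    -- the distributed-delay argument of `f` only depends on the a.e. class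
    (hclass : ∀ t : ℝ, ∀ ξ : Fin (ℓ + 1) → (Fin n → ℝ), ∀ φ ψ : ℝ → (Fin n → ℝ),
      φ =ᵐ[volume.restrict (Set.Icc (-θ) 0)] ψ → f t ξ φ = f t ξ ψ)
    -- local Lipschitz continuity in `(ξ_{0:ℓ}, φ)` (with `L^∞` norm on `φ`),
    -- uniformly for a.e. `t` in compacts
    (hLip : ∀ R > (0 : ℝ), ∀ T > (0 : ℝ), ∃ L ≥ (0 : ℝ),
      ∀ᵐ t ∂(volume.restrict (Set.Icc 0 T)),
        ∀ ξ ζ : Fin (ℓ + 1) → (Fin n → ℝ), (∀ i, ‖ξ i‖ ≤ R) → (∀ i, ‖ζ i‖ ≤ R) →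
        ∀ φ ψ : ℝ → (Fin n → ℝ),
          AEStronglyMeasurable φ (volume.restrict (Set.Icc (-θ) 0)) →
          AEStronglyMeasurable ψ (volume.restrict (Set.Icc (-θ) 0)) →
          eLpNorm φ ⊤ (volume.restrict (Set.Icc (-θ) 0)) ≤ ENNReal.ofReal R →
          eLpNorm ψ ⊤ (volume.restrict (Set.Icc (-θ) 0)) ≤ ENNReal.ofReal R →
          ‖f t ξ φ - f t ζ ψ‖ ≤ L * max (⨆ i, ‖ξ i - ζ i‖)
            (eLpNorm (fun s => φ s - ψ s) ⊤ (volume.restrict (Set.Icc (-θ) 0))).toReal)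
    (hf0 : ∀ T > (0 : ℝ), ∃ C : ℝ, ∀ᵐ t ∂(volume.restrict (Set.Icc 0 T)),
      ‖f t (fun _ => 0) 0‖ ≤ C)
    (hfmeas : ∀ t0 ≥ (0 : ℝ), ∀ T > t0, ∀ φ : ℝ → (Fin n → ℝ), Measurable φ →
      (∃ C : ℝ, ∀ u, ‖φ u‖ ≤ C) → ∀ x : ℝ → (Fin n → ℝ), ContinuousOn x (Set.Icc t0 T) →
      AEMeasurable (fun t => f t (fun i => conc18 n t0 φ x (t - τ i))
        (fun u => conc18 n t0 φ x (t + u))) (volume.restrict (Set.Icc t0 T)))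
    (t0 : ℝ) (ht0 : 0 ≤ t0)
    (φ1 φ2 : ℝ → (Fin n → ℝ)) (hφ2m : Measurable φ2)
    (hφ2b : ∃ C : ℝ, ∀ u, ‖φ2 u‖ ≤ C)
    (hae : φ1 =ᵐ[volume.restrict (Set.Icc (-θ) 0)] φ2) (h0 : φ1 0 = φ2 0)
    (x1 x2 : ℝ → (Fin n → ℝ)) (T1 T2 : ℝ≥0∞)
    (hx1 : IsMaxSolOn18 n ℓ f τ t0 φ1 x1 T1)
    (hx2 : IsMaxSolOn18 n ℓ f τ t0 φ2 x2 T2) :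
    T1 = T2 ∧ ∀ t, t0 ≤ t → ENNReal.ofReal t < T1 → x1 t = x2 t := by
  have hτ_nonneg : ∀ i, 0 ≤ τ i := fun i => hτ0 ▸ hτmono.monotone (Fin.zero_le i)
  have hτ_le : ∀ i, τ i ≤ θ := fun i => hτlast ▸ hτmono.monotone (Fin.le_last i)
  have h12 : IsSolOn18 n ℓ f τ t0 φ2 x1 T1 :=
    hx1.1.of_ae_delayField_eq h0 (ae_delayField_eq hτ_le hclass hae)
  have h21 : IsSolOn18 n ℓ f τ t0 φ1 x2 T2 :=
    hx2.1.of_ae_delayField_eq h0.symm (ae_delayField_eq hτ_le hclass hae.symm)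
  have hagree : ∀ t, t0 ≤ t → ENNReal.ofReal t < T1 → ENNReal.ofReal t < T2 → x1 t = x2 t :=
    fun t ht h1 h2 => h12.eqOn hτ_nonneg hLip hf0
      (fun T hT x hx => hfmeas t0 ht0 T hT φ2 hφ2m hφ2b x hx) ht0 hφ2m hφ2b hx2.1 h1 h2
      ⟨ht, le_rfl⟩
  have hT : T1 = T2 := hx1.lifespan_eq hx2 h21 h12 hagree
  exact ⟨hT, fun t ht h1 => hagree t ht h1 (hT ▸ h1)⟩

/-- Insensitivity to modifications of the initial history on null sets: if
`φ¹ = φ²` a.e. on `[−θ,0]` and `φ¹(0) = φ²(0)`, the corresponding maximal solutions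
of the mixed discrete/distributed delay system coincide. -/
theorem stmt_18 (n ℓ : ℕ) (θ : ℝ) (hθ : 0 < θ)
    (τ : Fin (ℓ + 1) → ℝ) (hτ0 : τ 0 = 0) (hτmono : StrictMono τ)
    (hτlast : τ (Fin.last ℓ) = θ)
    (f : ℝ → (Fin (ℓ + 1) → (Fin n → ℝ)) → (ℝ → (Fin n → ℝ)) → (Fin n → ℝ))
    -- the distributed-delay argument of `f` only depends on the a.e. class
    (hclass : ∀ t : ℝ, ∀ ξ : Fin (ℓ + 1) → (Fin n → ℝ), ∀ φ ψ : ℝ → (Fin n → ℝ),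
      φ =ᵐ[volume.restrict (Set.Icc (-θ) 0)] ψ → f t ξ φ = f t ξ ψ)
    -- local Lipschitz continuity in `(ξ_{0:ℓ}, φ)` (with `L^∞` norm on `φ`),
    -- uniformly for a.e. `t` in compacts
    (hLip : ∀ R > (0 : ℝ), ∀ T > (0 : ℝ), ∃ L ≥ (0 : ℝ),
      ∀ᵐ t ∂(volume.restrict (Set.Icc 0 T)),
        ∀ ξ ζ : Fin (ℓ + 1) → (Fin n → ℝ), (∀ i, ‖ξ i‖ ≤ R) → (∀ i, ‖ζ i‖ ≤ R) →
        ∀ φ ψ : ℝ → (Fin n → ℝ),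
          AEStronglyMeasurable φ (volume.restrict (Set.Icc (-θ) 0)) →
          AEStronglyMeasurable ψ (volume.restrict (Set.Icc (-θ) 0)) →
          eLpNorm φ ⊤ (volume.restrict (Set.Icc (-θ) 0)) ≤ ENNReal.ofReal R →
          eLpNorm ψ ⊤ (volume.restrict (Set.Icc (-θ) 0)) ≤ ENNReal.ofReal R →
          ‖f t ξ φ - f t ζ ψ‖ ≤ L * max (⨆ i, ‖ξ i - ζ i‖)
            (eLpNorm (fun s => φ s - ψ s) ⊤ (volume.restrict (Set.Icc (-θ) 0))).toReal)
    (hf0 : ∀ T > (0 : ℝ), ∃ C : ℝ, ∀ᵐ t ∂(volume.restrict (Set.Icc 0 T)),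
      ‖f t (fun _ => 0) 0‖ ≤ C)
    (hfmeas : ∀ t0 ≥ (0 : ℝ), ∀ T > t0, ∀ φ : ℝ → (Fin n → ℝ), Measurable φ →
      (∃ C : ℝ, ∀ u, ‖φ u‖ ≤ C) → ∀ x : ℝ → (Fin n → ℝ), ContinuousOn x (Set.Icc t0 T) →
      AEMeasurable (fun t => f t (fun i => conc18 n t0 φ x (t - τ i))
        (fun u => conc18 n t0 φ x (t + u))) (volume.restrict (Set.Icc t0 T)))
    (t0 : ℝ) (ht0 : 0 ≤ t0)
    (φ1 φ2 : ℝ → (Fin n → ℝ)) (hφ1m : Measurable φ1) (hφ2m : Measurable φ2)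
    (hφ1b : ∃ C : ℝ, ∀ u, ‖φ1 u‖ ≤ C) (hφ2b : ∃ C : ℝ, ∀ u, ‖φ2 u‖ ≤ C)
    (hae : φ1 =ᵐ[volume.restrict (Set.Icc (-θ) 0)] φ2) (h0 : φ1 0 = φ2 0)
    (x1 x2 : ℝ → (Fin n → ℝ)) (T1 T2 : ℝ≥0∞)
    (hx1 : IsMaxSolOn18 n ℓ f τ t0 φ1 x1 T1)
    (hx2 : IsMaxSolOn18 n ℓ f τ t0 φ2 x2 T2) :
    T1 = T2 ∧ ∀ t, t0 ≤ t → ENNReal.ofReal t < T1 → x1 t = x2 t :=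
  stmt_18_general n ℓ θ τ hτ0 hτmono hτlast f hclass hLip hf0 hfmeas t0 ht0 φ1 φ2 hφ2m hφ2b hae h0
    x1 x2 T1 T2 hx1 hx2
end

section
/- Suppose for a system with solutions x(·; t0, ξ, φ) the following continuity property holds: whenever ξᵏ → ξ⁰ in ℝⁿ and φᵏ ⇀ φ⁰ weak-* in L^∞, and the limit solution x(·;t0,ξ⁰,φ⁰) is defined and bounded on [t0,T′] for some T′ > T, then x(·;t0,ξᵏ,φᵏ) converges to x(·;t0,ξ⁰,φ⁰) uniformly on [t0,T′]. If moreover every solution with ξ ∈ B_R^n and φ ∈ B_R^{L^∞} is defined beyond time T, then sup{ |x(t;t0,ξ,φ)| : t ∈ [t0,T], |ξ| ≤ R, ‖φ‖ ≤ R } < ∞. -/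
/-!
If the reachable values were unbounded, there would be data `(ξᵏ, φᵏ)` in the balls and times
`tᵏ ∈ [t0, T]` with `‖x(tᵏ; ξᵏ, φᵏ)‖ > k`. Closed balls of `ℝⁿ` are compact and bounded sets of
`L^∞` are sequentially weak-* compact, so along a subsequence `ξᵏ → ξ⁰` and `φᵏ ⇀ φ⁰` with
`(ξ⁰, φ⁰)` again in the balls. The limit solution then lives on some `[t0, T']` with `T' > T`, is
bounded there, and the uniform convergence of the solutions bounds `‖x(tᵏ; ξᵏ, φᵏ)‖` along the
subsequence.

The weak-* compactness is obtained in `L²`: the coordinates of `φᵏ` are bounded in the separable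
Hilbert space `L²`, whose balls are weakly sequentially compact (sequential Banach–Alaoglu and the
Riesz representation). Testing against indicators shows that the weak limit is still bounded by
`R`, and for uniformly bounded functions convergence against bounded test functions extends to
integrable ones by truncating the test function.
-/

open MeasureTheory Set Filter Topology
open scoped ENNReal RealInnerProductSpace

theorem exists_subseq_tendsto_inner_of_norm_le {H : Type*} [NormedAddCommGroup H]
    [InnerProductSpace ℝ H] [CompleteSpace H] [TopologicalSpace.SeparableSpace H]
    {x : ℕ → H} {M : ℝ} (hx : ∀ k, ‖x k‖ ≤ M) :
    ∃ x₀ : H, ∃ σ : ℕ → ℕ, StrictMono σ ∧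
      ∀ v, Tendsto (fun k => ⟪x (σ k), v⟫) atTop (𝓝 ⟪x₀, v⟫) := by
  let ℓ : ℕ → WeakDual ℝ H := fun k =>
    StrongDual.toWeakDual (InnerProductSpace.toDual ℝ H (x k))
  have hℓ : ∀ k, ℓ k ∈ WeakDual.toStrongDual ⁻¹' Metric.closedBall 0 M := fun k => by
    simpa [ℓ] using hx k
  obtain ⟨ℓ₀, -, σ, hσ, hlim⟩ := WeakDual.isSeqCompact_closedBall ℝ H 0 M hℓ
  refine ⟨(InnerProductSpace.toDual ℝ H).symm (WeakDual.toStrongDual ℓ₀), σ, hσ, fun v => ?_⟩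
  rw [InnerProductSpace.toDual_symm_apply]
  exact ((WeakDual.eval_continuous v).tendsto ℓ₀).comp hlim

-- Weak convergence in the Hilbert sum `PiLp 2` is coordinatewise: test against `Pi.single j v`.
theorem exists_subseq_tendsto_inner_apply_of_norm_le {ι : Type*} [Fintype ι] {E : Type*}
    [NormedAddCommGroup E] [InnerProductSpace ℝ E] [CompleteSpace E]
    [TopologicalSpace.SeparableSpace E] {u : ℕ → ι → E} {M : ℝ} (hu : ∀ k, ‖u k‖ ≤ M) :
    ∃ u₀ : ι → E, ∃ σ : ℕ → ℕ, StrictMono σ ∧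
      ∀ j v, Tendsto (fun k => ⟪u (σ k) j, v⟫) atTop (𝓝 ⟪u₀ j, v⟫) := by
  let e := PiLp.continuousLinearEquiv 2 ℝ fun _ : ι => E
  have : TopologicalSpace.SeparableSpace (PiLp 2 fun _ : ι => E) :=
    e.symm.surjective.denseRange.separableSpace e.symm.continuous
  have hbd : ∀ k, ‖WithLp.toLp 2 (u k)‖ ≤ _ * M := fun k =>
    ((PiLp.lipschitzWith_toLp 2 _).norm_le_mul (by simp) (u k)).trans
      (by gcongr; exact hu k)
  obtain ⟨x₀, σ, hσ, hlim⟩ := exists_subseq_tendsto_inner_of_norm_le hbd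
  refine ⟨x₀.ofLp, σ, hσ, fun j v => ?_⟩
  classical
  simpa [PiLp.inner_apply, Pi.single_apply, apply_ite (inner ℝ _)] using
    hlim (WithLp.toLp 2 (Pi.single j v))

section

variable {α : Type*} [MeasurableSpace α] {μ : Measure α}

theorem abs_max_min_neg_le {m : ℝ} (hm : 0 ≤ m) (a : ℝ) : |max (min a m) (-m)| ≤ |a| :=
  abs_le.mpr ⟨le_max_of_le_left (le_min (neg_abs_le a) ((neg_nonpos.2 (abs_nonneg a)).trans hm)),
    max_le ((min_le_left _ _).trans (le_abs_self a)) ((neg_nonpos.2 hm).trans (abs_nonneg a))⟩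

theorem eventually_max_min_neg_eq (a : ℝ) :
    ∀ᶠ m : ℕ in atTop, max (min a (m : ℝ)) (-(m : ℝ)) = a := by
  filter_upwards [eventually_ge_atTop ⌈|a|⌉₊] with m hm
  have hm' : |a| ≤ m := (Nat.le_ceil _).trans (Nat.cast_le.mpr hm)
  rw [min_eq_left ((le_abs_self a).trans hm'), max_eq_left (neg_le_of_abs_le hm')]

theorem MeasureTheory.Integrable.exists_memLp_top_tendsto_integral_abs_sub {g : α → ℝ}
    (hg : Integrable g μ) :
    ∃ gₘ : ℕ → α → ℝ, (∀ m, Integrable (gₘ m) μ ∧ MemLp (gₘ m) ⊤ μ) ∧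
      Tendsto (fun m => ∫ s, |g s - gₘ m s| ∂μ) atTop (𝓝 0) := by
  set gₘ : ℕ → α → ℝ := fun m s => max (min (g s) m) (-(m : ℝ))
  have hmeas : ∀ m, AEStronglyMeasurable (gₘ m) μ := fun m =>
    ((continuous_id.min continuous_const).max continuous_const).comp_aestronglyMeasurable hg.1
  have hle : ∀ m s, |gₘ m s| ≤ |g s| := fun m s => abs_max_min_neg_le m.cast_nonneg _
  refine ⟨gₘ, fun m => ⟨hg.mono (hmeas m) (.of_forall fun s => hle m s), ?_⟩, ?_⟩
  · refine memLp_top_of_bound (hmeas m) m (.of_forall fun s => abs_le.mpr ⟨le_max_right _ _, ?_⟩)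
    exact max_le (min_le_right _ _) (neg_le_self m.cast_nonneg)
  · simpa using tendsto_integral_of_dominated_convergence
      (F := fun m s => |g s - gₘ m s|) (f := fun _ => 0) (fun s => 2 * |g s|)
      (fun m => (hg.1.sub (hmeas m)).norm.congr (.of_forall fun _ => Real.norm_eq_abs _))
      (hg.abs.const_mul 2)
      (fun m => .of_forall fun s => by
        rw [Real.norm_eq_abs, abs_abs, two_mul]
        exact (abs_sub _ _).trans (add_le_add_right (hle m s) _))
      (.of_forall fun s => tendsto_const_nhds.congr' <|
        (eventually_max_min_neg_eq (g s)).mono fun m hm => by simp [gₘ, hm])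

theorem dist_integral_mul_le {g h w : α → ℝ} {R : ℝ} (hg : Integrable g μ)
    (hh : Integrable h μ) (hw : AEStronglyMeasurable w μ) (hwR : ∀ᵐ s ∂μ, |w s| ≤ R) :
    dist (∫ s, g s * w s ∂μ) (∫ s, h s * w s ∂μ) ≤ R * ∫ s, |g s - h s| ∂μ := by
  have hwR' : ∀ᵐ s ∂μ, ‖w s‖ ≤ R := by simpa only [Real.norm_eq_abs] using hwR
  rw [dist_eq_norm, ← integral_sub (hg.mul_bdd hw hwR') (hh.mul_bdd hw hwR'),
    ← integral_const_mul]
  refine norm_integral_le_of_norm_le ((hg.sub hh).abs.const_mul R) ?_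
  filter_upwards [hwR] with s hs
  rw [← sub_mul, norm_mul, Real.norm_eq_abs, mul_comm]
  exact mul_le_mul_of_nonneg_right hs (abs_nonneg _)

theorem tendsto_integral_mul_of_forall_memLp_top {u : ℕ → α → ℝ} {u₀ : α → ℝ} {R : ℝ}
    (hu : ∀ k, AEStronglyMeasurable (u k) μ) (huR : ∀ k, ∀ᵐ s ∂μ, |u k s| ≤ R)
    (hu₀ : AEStronglyMeasurable u₀ μ) (hu₀R : ∀ᵐ s ∂μ, |u₀ s| ≤ R)
    (htest : ∀ h : α → ℝ, MemLp h ⊤ μ →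
      Tendsto (fun k => ∫ s, h s * u k s ∂μ) atTop (𝓝 (∫ s, h s * u₀ s ∂μ)))
    {g : α → ℝ} (hg : Integrable g μ) :
    Tendsto (fun k => ∫ s, g s * u k s ∂μ) atTop (𝓝 (∫ s, g s * u₀ s ∂μ)) := by
  obtain ⟨gₘ, hgₘ, herr⟩ := hg.exists_memLp_top_tendsto_integral_abs_sub
  replace herr := herr.const_mul R
  rw [mul_zero] at herr
  refine TendstoUniformly.tendsto_of_eventually_tendsto (p := atTop)
    (F := fun m k => ∫ s, gₘ m s * u k s ∂μ) (L := fun m => ∫ s, gₘ m s * u₀ s ∂μ) ?_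
    (.of_forall fun m => htest _ (hgₘ m).2) ?_
  · rw [Metric.tendstoUniformly_iff]
    intro ε hε
    filter_upwards [herr.eventually (gt_mem_nhds hε)] with m hm k
    exact (dist_integral_mul_le hg (hgₘ m).1 (hu k) (huR k)).trans_lt hm
  · rw [tendsto_iff_dist_tendsto_zero]
    refine squeeze_zero (fun _ => dist_nonneg) (fun m => ?_) herr
    rw [dist_comm]
    exact dist_integral_mul_le hg (hgₘ m).1 hu₀ hu₀R

theorem ae_le_of_tendsto_setIntegral [IsFiniteMeasure μ] {u : ℕ → α → ℝ} {u₀ : α → ℝ} {R : ℝ}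
    (hu : ∀ k, Integrable (u k) μ) (huR : ∀ k, ∀ᵐ s ∂μ, u k s ≤ R) (hu₀ : Integrable u₀ μ)
    (hlim : ∀ A, MeasurableSet A →
      Tendsto (fun k => ∫ s in A, u k s ∂μ) atTop (𝓝 (∫ s in A, u₀ s ∂μ))) :
    ∀ᵐ s ∂μ, u₀ s ≤ R :=
  ae_le_of_forall_setIntegral_le hu₀ (integrable_const R) fun A hA _ =>
    le_of_tendsto' (hlim A hA) fun k =>
      setIntegral_mono_ae (hu k).integrableOn (integrable_const R).integrableOn (huR k)

theorem ae_abs_le_of_tendsto_integral_mul [IsFiniteMeasure μ] {u : ℕ → α → ℝ} {u₀ : α → ℝ}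
    {R : ℝ} (hu : ∀ k, Integrable (u k) μ) (huR : ∀ k, ∀ᵐ s ∂μ, |u k s| ≤ R)
    (hu₀ : Integrable u₀ μ)
    (htest : ∀ h : α → ℝ, MemLp h ⊤ μ →
      Tendsto (fun k => ∫ s, h s * u k s ∂μ) atTop (𝓝 (∫ s, h s * u₀ s ∂μ))) :
    ∀ᵐ s ∂μ, |u₀ s| ≤ R := by
  have hset : ∀ A, MeasurableSet A →
      Tendsto (fun k => ∫ s in A, u k s ∂μ) atTop (𝓝 (∫ s in A, u₀ s ∂μ)) := by
    intro A hA
    have hind : MemLp (A.indicator fun _ => (1 : ℝ)) ⊤ μ := (memLp_top_const 1).indicator hA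
    simpa only [← indicator_mul_left, one_mul, integral_indicator hA] using htest _ hind
  have hupper := ae_le_of_tendsto_setIntegral hu (fun k => (huR k).mono fun s => le_of_abs_le)
    hu₀ hset
  have hlower := ae_le_of_tendsto_setIntegral (u := fun k s => -u k s) (u₀ := fun s => -u₀ s)
    (fun k => (hu k).neg) (fun k => (huR k).mono fun s hs => (neg_le_abs _).trans hs) hu₀.neg
    fun A hA => by simpa only [integral_neg] using (hset A hA).neg
  filter_upwards [hupper, hlower] with s h₁ h₂
  exact abs_le.mpr ⟨neg_le.mp h₂, h₁⟩

theorem MeasureTheory.L2.inner_toLp_right {f : Lp ℝ 2 μ} {h : α → ℝ} (hh : MemLp h 2 μ) :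
    ⟪f, hh.toLp h⟫ = ∫ s, h s * f s ∂μ :=
  (L2.inner_def _ _).trans <| integral_congr_ae <| hh.coeFn_toLp.mono fun s hs => by
    simp [hs]

theorem eLpNorm_top_le_ofReal_iff {E : Type*} [NormedAddCommGroup E] {f : α → E} {R : ℝ}
    (hR : 0 ≤ R) : eLpNorm f ⊤ μ ≤ ENNReal.ofReal R ↔ ∀ᵐ s ∂μ, ‖f s‖ ≤ R := by
  rw [eLpNorm_exponent_top]
  refine ⟨fun h => ?_, eLpNormEssSup_le_of_ae_bound⟩
  filter_upwards [ae_le_eLpNormEssSup (f := f)] with s hs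
  rw [← ENNReal.ofReal_le_ofReal_iff hR, ofReal_norm]
  exact hs.trans h

theorem eLpNorm_pi_top_le_ofReal_iff {ι : Type*} [Fintype ι] {φ : α → ι → ℝ} {R : ℝ}
    (hR : 0 ≤ R) : eLpNorm φ ⊤ μ ≤ ENNReal.ofReal R ↔ ∀ᵐ s ∂μ, ∀ j, |φ s j| ≤ R := by
  simp only [eLpNorm_top_le_ofReal_iff hR, pi_norm_le_iff_of_nonneg hR, Real.norm_eq_abs]

theorem exists_subseq_tendsto_integral_mul_apply [IsFiniteMeasure μ]
    [MeasurableSpace.CountablyGenerated α] {ι : Type*} [Fintype ι] {R : ℝ} (hR : 0 ≤ R)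
    {φ : ℕ → α → ι → ℝ} (hφ : ∀ k, AEStronglyMeasurable (φ k) μ)
    (hφR : ∀ k, ∀ᵐ s ∂μ, ∀ j, |φ k s j| ≤ R) :
    ∃ σ : ℕ → ℕ, ∃ φ₀ : α → ι → ℝ, StrictMono σ ∧ (∀ j, Integrable (fun s => φ₀ s j) μ) ∧
      ∀ j, ∀ h : α → ℝ, MemLp h ⊤ μ →
        Tendsto (fun k => ∫ s, h s * φ (σ k) s j ∂μ) atTop (𝓝 (∫ s, h s * φ₀ s j ∂μ)) := by
  have : Fact ((2 : ℝ≥0∞) ≠ ∞) := ⟨ENNReal.ofNat_ne_top⟩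
  have hmem : ∀ k j, MemLp (fun s => φ k s j) 2 μ := fun k j =>
    (memLp_top_of_bound ((continuous_apply j).comp_aestronglyMeasurable (hφ k)) R
      ((hφR k).mono fun s hs => (hs j))).mono_exponent le_top
  let u : ℕ → ι → Lp ℝ 2 μ := fun k j => (hmem k j).toLp
  have hu : ∀ k, ‖u k‖ ≤ measureUnivNNReal μ ^ (2 : ℝ≥0∞).toReal⁻¹ * R := fun k =>
    (pi_norm_le_iff_of_nonneg (by positivity)).2 fun j => Lp.norm_le_of_ae_bound hR <|
      ((hmem k j).coeFn_toLp.and (hφR k)).mono fun s hs => by simpa [u, hs.1] using hs.2 j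
  obtain ⟨u₀, σ, hσ, hlim⟩ := exists_subseq_tendsto_inner_apply_of_norm_le hu
  refine ⟨σ, fun s j => u₀ j s, hσ, fun j => (Lp.memLp (u₀ j)).integrable one_le_two,
    fun j h hh => ?_⟩
  have hh₂ := hh.mono_exponent (le_top : (2 : ℝ≥0∞) ≤ ⊤)
  have hlim' := hlim j (hh₂.toLp h)
  simp only [L2.inner_toLp_right] at hlim'
  refine hlim'.congr fun k => integral_congr_ae <| (hmem (σ k) j).coeFn_toLp.mono fun s hs => ?_
  simp [u, hs]

theorem exists_subseq_tendsto_integral_sum_mul [IsFiniteMeasure μ]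
    [MeasurableSpace.CountablyGenerated α] {ι : Type*} [Fintype ι] {R : ℝ} (hR : 0 ≤ R)
    {φ : ℕ → α → ι → ℝ} (hφ : ∀ k, AEStronglyMeasurable (φ k) μ)
    (hφR : ∀ k, eLpNorm (φ k) ⊤ μ ≤ ENNReal.ofReal R) :
    ∃ σ : ℕ → ℕ, ∃ φ₀ : α → ι → ℝ, StrictMono σ ∧ AEStronglyMeasurable φ₀ μ ∧
      eLpNorm φ₀ ⊤ μ ≤ ENNReal.ofReal R ∧
      ∀ g : α → ι → ℝ, Integrable g μ →
        Tendsto (fun k => ∫ s, ∑ j, g s j * φ (σ k) s j ∂μ) atTop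
          (𝓝 (∫ s, ∑ j, g s j * φ₀ s j ∂μ)) := by
  have hφR' := fun k => (eLpNorm_pi_top_le_ofReal_iff hR).1 (hφR k)
  obtain ⟨σ, φ₀, hσ, hφ₀, hlim⟩ := exists_subseq_tendsto_integral_mul_apply hR hφ hφR'
  have hφj : ∀ k j, AEStronglyMeasurable (fun s => φ k s j) μ := fun k j =>
    (continuous_apply j).comp_aestronglyMeasurable (hφ k)
  have hφjR : ∀ k j, ∀ᵐ s ∂μ, |φ k s j| ≤ R := fun k j => (hφR' k).mono fun s hs => hs j
  have hφ₀R : ∀ j, ∀ᵐ s ∂μ, |φ₀ s j| ≤ R := fun j =>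
    ae_abs_le_of_tendsto_integral_mul
      (fun k => (memLp_top_of_bound (hφj _ j) R (hφjR _ j)).integrable le_top)
      (fun k => hφjR _ j) (hφ₀ j) (hlim j)
  refine ⟨σ, φ₀, hσ,
    (aemeasurable_pi_lambda _ fun j => (hφ₀ j).aemeasurable).aestronglyMeasurable,
    (eLpNorm_pi_top_le_ofReal_iff hR).2 (ae_all_iff.2 hφ₀R), fun g hg => ?_⟩
  have hint : ∀ ψ : α → ι → ℝ, (∀ j, AEStronglyMeasurable (fun s => ψ s j) μ) →
      (∀ j, ∀ᵐ s ∂μ, |ψ s j| ≤ R) → ∀ j, Integrable (fun s => g s j * ψ s j) μ :=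
    fun ψ hψ hψR j =>
      (hg.eval j).mul_bdd (hψ j) (by simpa only [Real.norm_eq_abs] using hψR j)
  rw [integral_finsetSum _ fun j _ => hint φ₀ (fun j => (hφ₀ j).1) hφ₀R j]
  refine (tendsto_finsetSum _ fun j _ => ?_).congr fun k =>
    (integral_finsetSum _ fun j _ => hint _ (hφj (σ k)) (hφjR (σ k)) j).symm
  exact tendsto_integral_mul_of_forall_memLp_top (fun k => hφj _ j) (fun k => hφjR _ j)
    (hφ₀ j).1 (hφ₀R j) (hlim j) (hg.eval j)

end

theorem bddAbove_image_of_forall_exists_subseq {X : Type*} {S : Set X} {F : X → ℝ}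
    (h : ∀ x : ℕ → X, (∀ k, x k ∈ S) →
      ∃ σ : ℕ → ℕ, StrictMono σ ∧ ∃ C, ∀ᶠ k in atTop, F (x (σ k)) ≤ C) :
    BddAbove (F '' S) := by
  by_contra hS
  simp only [not_bddAbove_iff, mem_image, exists_exists_and_eq_and] at hS
  choose x hxS hx using fun k : ℕ => hS k
  obtain ⟨σ, hσ, C, hC⟩ := h x hxS
  obtain ⟨k, hk, hkC⟩ := (hC.and (eventually_ge_atTop ⌈C⌉₊)).exists
  have hσk : (k : ℝ) ≤ σ k := Nat.cast_le.2 (hσ.id_le k)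
  linarith [hx (σ k), Nat.le_ceil C, (Nat.cast_le (α := ℝ)).2 hkC]

theorem TendstoUniformlyOn.eventually_forall_norm_le {ι β E : Type*}
    [SeminormedAddCommGroup E]
    {F : ι → β → E} {f : β → E} {p : Filter ι} {s : Set β} {C : ℝ}
    (h : TendstoUniformlyOn F f p s) (hf : ∀ x ∈ s, ‖f x‖ ≤ C) :
    ∀ᶠ i in p, ∀ x ∈ s, ‖F i x‖ ≤ C + 1 := by
  filter_upwards [Metric.tendstoUniformlyOn_iff.1 h 1 one_pos] with i hi x hx
  have hdist := hi x hx
  rw [dist_comm, dist_eq_norm] at hdist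
  linarith [norm_sub_norm_le (F i x) (f x), hf x hx]

theorem stmt_19_general (n : ℕ) (θ t0 T R : ℝ)
    (sol : (Fin n → ℝ) → (ℝ → (Fin n → ℝ)) → ℝ → (Fin n → ℝ))
    (Tmax : (Fin n → ℝ) → (ℝ → (Fin n → ℝ)) → ℝ≥0∞)
    -- solutions are continuous on compact subintervals of their maximal interval
    (hsolcont : ∀ (ξ : Fin n → ℝ) (φ : ℝ → (Fin n → ℝ)) (T' : ℝ),
      ENNReal.ofReal T' < Tmax ξ φ → ContinuousOn (sol ξ φ) (Set.Icc t0 T'))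
    -- weak-* continuity of the solution map
    (hcont : ∀ (ξ : ℕ → (Fin n → ℝ)) (ξ0 : Fin n → ℝ)
      (φ : ℕ → ℝ → (Fin n → ℝ)) (φ0 : ℝ → (Fin n → ℝ)) (T' : ℝ), T < T' →
      (∀ k, AEStronglyMeasurable (φ k) (volume.restrict (Set.Icc (-θ) 0))) →
      AEStronglyMeasurable φ0 (volume.restrict (Set.Icc (-θ) 0)) →
      Tendsto ξ atTop (nhds ξ0) →
      (∀ g : ℝ → (Fin n → ℝ), Integrable g (volume.restrict (Set.Icc (-θ) 0)) →
        Tendsto (fun k => ∫ s in Set.Icc (-θ) 0, ∑ j, g s j * φ k s j) atTop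
          (nhds (∫ s in Set.Icc (-θ) 0, ∑ j, g s j * φ0 s j))) →
      ENNReal.ofReal T' < Tmax ξ0 φ0 →
      (∃ C : ℝ, ∀ t ∈ Set.Icc t0 T', ‖sol ξ0 φ0 t‖ ≤ C) →
      TendstoUniformlyOn (fun k t => sol (ξ k) (φ k) t) (sol ξ0 φ0) atTop
        (Set.Icc t0 T'))
    -- every solution from the ball of radius R is defined beyond time T
    (hdef : ∀ (ξ : Fin n → ℝ) (φ : ℝ → (Fin n → ℝ)), ‖ξ‖ ≤ R →
      AEStronglyMeasurable φ (volume.restrict (Set.Icc (-θ) 0)) →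
      eLpNorm φ ⊤ (volume.restrict (Set.Icc (-θ) 0)) ≤ ENNReal.ofReal R →
      ENNReal.ofReal T < Tmax ξ φ) :
    ∃ C : ℝ, ∀ t ∈ Set.Icc t0 T, ∀ (ξ : Fin n → ℝ) (φ : ℝ → (Fin n → ℝ)),
      ‖ξ‖ ≤ R →
      AEStronglyMeasurable φ (volume.restrict (Set.Icc (-θ) 0)) →
      eLpNorm φ ⊤ (volume.restrict (Set.Icc (-θ) 0)) ≤ ENNReal.ofReal R →
      ‖sol ξ φ t‖ ≤ C := by
  set μ := volume.restrict (Icc (-θ) 0)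
  refine (bddAbove_image_of_forall_exists_subseq
    (F := fun p : (Fin n → ℝ) × (ℝ → Fin n → ℝ) × ℝ => ‖sol p.1 p.2.1 p.2.2‖)
    (S := {p | ‖p.1‖ ≤ R ∧ AEStronglyMeasurable p.2.1 μ ∧
      eLpNorm p.2.1 ⊤ μ ≤ ENNReal.ofReal R ∧ p.2.2 ∈ Icc t0 T}) fun x hx => ?_).imp
    fun C hC t ht ξ φ hξ hφ hφR => hC ⟨(ξ, φ, t), ⟨hξ, hφ, hφR, ht⟩, rfl⟩
  obtain ⟨ξ₀, hξ₀, σ₁, hσ₁, hξ⟩ := (isCompact_closedBall (0 : Fin n → ℝ) R).tendsto_subseq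
    (x := fun k => (x k).1) fun k => mem_closedBall_zero_iff.2 (hx k).1
  obtain ⟨σ₂, φ₀, hσ₂, hφ₀, hφ₀R, hφ⟩ := exists_subseq_tendsto_integral_sum_mul
    ((norm_nonneg _).trans (hx 0).1) (φ := fun k => (x (σ₁ k)).2.1)
    (fun k => (hx _).2.1) (fun k => (hx _).2.2.1)
  obtain ⟨T', -, hT'T, hT'⟩ := ENNReal.lt_iff_exists_real_btwn.1 <|
    hdef ξ₀ φ₀ (mem_closedBall_zero_iff.1 hξ₀) hφ₀ hφ₀R
  have hTT' : T < T' := (ENNReal.ofReal_lt_ofReal_iff'.1 hT'T).1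
  obtain ⟨C₀, hC₀⟩ := isCompact_Icc.exists_bound_of_continuousOn (hsolcont ξ₀ φ₀ T' hT')
  have hunif := hcont _ ξ₀ _ φ₀ T' hTT' (fun k => (hx _).2.1) hφ₀
    (hξ.comp hσ₂.tendsto_atTop) hφ hT' ⟨C₀, hC₀⟩
  exact ⟨σ₁ ∘ σ₂, hσ₁.comp hσ₂, C₀ + 1, (hunif.eventually_forall_norm_le hC₀).mono fun k hk =>
    hk _ (Icc_subset_Icc_right hTT'.le (hx _).2.2.2)⟩

/-- Forward completeness beyond time `T` plus weak-* continuity of the solution map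
implies bounded reachability sets on `[t0,T]`: if whenever `ξᵏ → ξ⁰` and `φᵏ ⇀ φ⁰`
(weak-* in `L^∞([−θ,0],ℝⁿ)`) with the limit solution defined and bounded on `[t0,T′]`
for some `T′ > T` the solutions converge uniformly on `[t0,T′]`, and if moreover every
solution starting in the ball of radius `R` is defined beyond time `T`, then the set of
vectors reachable from that ball over `[t0,T]` is bounded. -/
theorem stmt_19 (n : ℕ) (θ t0 T R : ℝ) (hθ : 0 < θ) (ht0 : 0 ≤ t0) (hT : t0 < T)
    (hR : 0 < R)
    (sol : (Fin n → ℝ) → (ℝ → (Fin n → ℝ)) → ℝ → (Fin n → ℝ))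
    (Tmax : (Fin n → ℝ) → (ℝ → (Fin n → ℝ)) → ℝ≥0∞)
    -- solutions are continuous on compact subintervals of their maximal interval
    (hsolcont : ∀ (ξ : Fin n → ℝ) (φ : ℝ → (Fin n → ℝ)) (T' : ℝ),
      ENNReal.ofReal T' < Tmax ξ φ → ContinuousOn (sol ξ φ) (Set.Icc t0 T'))
    -- weak-* continuity of the solution map
    (hcont : ∀ (ξ : ℕ → (Fin n → ℝ)) (ξ0 : Fin n → ℝ)
      (φ : ℕ → ℝ → (Fin n → ℝ)) (φ0 : ℝ → (Fin n → ℝ)) (T' : ℝ), T < T' →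
      (∀ k, AEStronglyMeasurable (φ k) (volume.restrict (Set.Icc (-θ) 0))) →
      AEStronglyMeasurable φ0 (volume.restrict (Set.Icc (-θ) 0)) →
      Tendsto ξ atTop (nhds ξ0) →
      (∀ g : ℝ → (Fin n → ℝ), Integrable g (volume.restrict (Set.Icc (-θ) 0)) →
        Tendsto (fun k => ∫ s in Set.Icc (-θ) 0, ∑ j, g s j * φ k s j) atTop
          (nhds (∫ s in Set.Icc (-θ) 0, ∑ j, g s j * φ0 s j))) →
      ENNReal.ofReal T' < Tmax ξ0 φ0 →
      (∃ C : ℝ, ∀ t ∈ Set.Icc t0 T', ‖sol ξ0 φ0 t‖ ≤ C) →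
      TendstoUniformlyOn (fun k t => sol (ξ k) (φ k) t) (sol ξ0 φ0) atTop
        (Set.Icc t0 T'))
    -- every solution from the ball of radius R is defined beyond time T
    (hdef : ∀ (ξ : Fin n → ℝ) (φ : ℝ → (Fin n → ℝ)), ‖ξ‖ ≤ R →
      AEStronglyMeasurable φ (volume.restrict (Set.Icc (-θ) 0)) →
      eLpNorm φ ⊤ (volume.restrict (Set.Icc (-θ) 0)) ≤ ENNReal.ofReal R →
      ENNReal.ofReal T < Tmax ξ φ) :
    ∃ C : ℝ, ∀ t ∈ Set.Icc t0 T, ∀ (ξ : Fin n → ℝ) (φ : ℝ → (Fin n → ℝ)),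
      ‖ξ‖ ≤ R →
      AEStronglyMeasurable φ (volume.restrict (Set.Icc (-θ) 0)) →
      eLpNorm φ ⊤ (volume.restrict (Set.Icc (-θ) 0)) ≤ ENNReal.ofReal R →
      ‖sol ξ φ t‖ ≤ C :=
  stmt_19_general n θ t0 T R sol Tmax hsolcont hcont hdef
end
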